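/- arXiv:2510.25581 — 3 statements merged into one kernel-verified Lean document; each statement's English description precedes it below -/
import Mathlib

section
/- Let $(X, \mathfrak{S})$ be a measurable space, $\nu$ and $\mu$ finite positive measures on it, and $(\eta_n)$ a sequence of bounded complex-valued measurable functions such that $\eta_n \to f$ weak-* in $L^\infty(X, \nu)$ and $\eta_n \to g$ weak-* in $L^\infty(X, \mu)$. Suppose $\mu = \mu_{ac} + \bar\mu$ with positive measures $\mu_{ac} \ll \nu$ and $\mu_{ac} \perp \bar\mu$. Then $f = g$ $\mu_{ac}$-almost everywhere. -/
open MeasureTheory Filter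

lemma weakstar_limit_bdd {X : Type*} [MeasurableSpace X]
    (ν : Measure X) [IsFiniteMeasure ν]
    (η : ℕ → X → ℂ) (B : ℝ) (hηb : ∀ n x, ‖η n x‖ ≤ B)
    (f : X → ℂ) (hf : Measurable f)
    (hν : ∀ φ : X → ℂ, Integrable φ ν →
      Tendsto (fun n => ∫ x, η n x * φ x ∂ν) atTop (nhds (∫ x, f x * φ x ∂ν))) :
    ∀ᵐ x ∂ν, ‖f x‖ ≤ B := by
  by_cases hX : Nonempty X
  swap
  · exact Filter.Eventually.of_forall fun x => absurd ⟨x⟩ hX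
  have hB : 0 ≤ B := le_trans (norm_nonneg _) (hηb 0 hX.some)
  set E : ℕ → Set X := fun k => {x | B < ‖f x‖ ∧ ‖f x‖ ≤ k} with hE
  have hEm : ∀ k, MeasurableSet (E k) := fun k =>
    ((measurableSet_lt measurable_const hf.norm)).inter
      (measurableSet_le hf.norm measurable_const)
  have hEnull : ∀ k, ν (E k) = 0 := by
    intro k
    set φ : X → ℂ := (E k).indicator
      (fun x => (starRingEnd ℂ) (f x) / ((‖f x‖ : ℝ) : ℂ)) with hφ
    have hφm : Measurable φ :=
      (((Complex.continuous_conj.measurable.comp hf)).div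
        (Complex.measurable_ofReal.comp hf.norm)).indicator (hEm k)
    have hφb : ∀ x, ‖φ x‖ ≤ 1 := by
      intro x
      by_cases hx : x ∈ E k
      · rw [hφ, Set.indicator_of_mem hx, norm_div, RCLike.norm_conj]
        simp only [Complex.norm_real, Real.norm_eq_abs,
          abs_of_nonneg (norm_nonneg (f x))]
        exact div_self_le_one (‖f x‖)
      · simp [hφ, Set.indicator_of_notMem hx]
    have hφint : Integrable φ ν :=
      Integrable.mono' (integrable_const 1) hφm.aestronglyMeasurable
        (Filter.Eventually.of_forall hφb)
    have hfφ : ∀ x, f x * φ x = (E k).indicator (fun x => ((‖f x‖ : ℝ) : ℂ)) x := by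
      intro x
      by_cases hx : x ∈ E k
      · simp only [hφ, Set.indicator_of_mem hx]
        have hfx : f x ≠ 0 := by
          intro h0
          have h1 := hx.1
          rw [h0] at h1
          simp only [norm_zero] at h1
          linarith
        rw [mul_div_assoc', Complex.mul_conj, Complex.normSq_eq_norm_sq]
        have habs : (‖f x‖ : ℂ) ≠ 0 := by simp [hfx]
        field_simp
        push_cast; ring
      · simp [hφ, Set.indicator_of_notMem hx]
    have hbound : ∀ n, ‖∫ x, η n x * φ x ∂ν‖ ≤ B * (ν (E k)).toReal := by
      intro n
      calc ‖∫ x, η n x * φ x ∂ν‖ ≤ ∫ x, ‖η n x * φ x‖ ∂ν := norm_integral_le_integral_norm _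
        _ ≤ ∫ x, (E k).indicator (fun _ => B) x ∂ν := by
            apply integral_mono_of_nonneg (Filter.Eventually.of_forall fun x => norm_nonneg _)
            · exact (integrable_const B).indicator (hEm k)
            · apply Filter.Eventually.of_forall
              intro x
              simp only [norm_mul]
              by_cases hx : x ∈ E k
              · rw [Set.indicator_of_mem hx]
                calc ‖η n x‖ * ‖φ x‖ ≤ B * 1 :=
                      mul_le_mul (hηb n x) (hφb x) (norm_nonneg _) hB
                  _ = B := mul_one B
              · rw [Set.indicator_of_notMem hx]
                have : φ x = 0 := by simp [hφ, Set.indicator_of_notMem hx]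
                simp [this]
        _ = B * (ν (E k)).toReal := by
            rw [integral_indicator_const _ (hEm k)]
            simp [mul_comm, Measure.real]
    have hlim := hν φ hφint
    have hfin : ‖∫ x, f x * φ x ∂ν‖ ≤ B * (ν (E k)).toReal :=
      le_of_tendsto (hlim.norm) (Filter.Eventually.of_forall hbound)
    have hcomm : ∀ x, (E k).indicator (fun x => ((‖f x‖ : ℝ) : ℂ)) x
        = (((E k).indicator (fun x => ‖f x‖) x : ℝ) : ℂ) := by
      intro x
      by_cases hx : x ∈ E k <;> simp [Set.indicator_of_mem, Set.indicator_of_notMem, hx]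
    have hreal : ∫ x, f x * φ x ∂ν
        = ((∫ x, (E k).indicator (fun x => ‖f x‖) x ∂ν : ℝ) : ℂ) := by
      simp_rw [hfφ, hcomm]
      exact integral_ofReal
    have habsint : Integrable ((E k).indicator (fun x => ‖f x‖)) ν := by
      apply Integrable.mono' ((integrable_const (k : ℝ)).indicator (hEm k))
        (hf.norm.indicator (hEm k)).aestronglyMeasurable
      apply Filter.Eventually.of_forall
      intro x
      by_cases hx : x ∈ E k
      · simp only [Set.indicator_of_mem hx, Real.norm_eq_abs]
        rw [abs_of_nonneg (norm_nonneg _)]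
        exact hx.2
      · simp [Set.indicator_of_notMem hx]
    have hle : ∫ x, (E k).indicator (fun x => ‖f x‖) x ∂ν
        ≤ B * (ν (E k)).toReal := by
      rw [hreal, Complex.norm_real, Real.norm_eq_abs] at hfin
      exact (le_abs_self _).trans hfin
    set G : X → ℝ := (E k).indicator (fun x => ‖f x‖ - B) with hG
    have hGnn : ∀ x, 0 ≤ G x := by
      intro x
      by_cases hx : x ∈ E k
      · rw [hG, Set.indicator_of_mem hx]; linarith [hx.1]
      · rw [hG, Set.indicator_of_notMem hx]
    have heq : G = fun x => (E k).indicator (fun x => ‖f x‖) x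
        - (E k).indicator (fun _ => B) x := by
      ext x
      by_cases hx : x ∈ E k <;>
        simp [hG, Set.indicator_of_mem, Set.indicator_of_notMem, hx]
    have hGint : Integrable G ν := by
      rw [heq]
      exact habsint.sub ((integrable_const B).indicator (hEm k))
    have hGzero : ∫ x, G x ∂ν = 0 := by
      have h1 : ∫ x, G x ∂ν ≤ 0 := by
        have : ∫ x, G x ∂ν = (∫ x, (E k).indicator (fun x => ‖f x‖) x ∂ν)
            - B * (ν (E k)).toReal := by
          rw [heq, integral_sub habsint ((integrable_const B).indicator (hEm k)),
            integral_indicator_const _ (hEm k)]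
          simp [mul_comm, Measure.real]
        rw [this]
        linarith
      have h2 : 0 ≤ ∫ x, G x ∂ν := integral_nonneg hGnn
      linarith
    have hae : G =ᵐ[ν] 0 := (integral_eq_zero_iff_of_nonneg hGnn hGint).mp hGzero
    have hsub : ν (E k) ≤ ν {x | G x ≠ 0} := by
      apply measure_mono
      intro x hx
      simp only [Set.mem_setOf_eq, hG, Set.indicator_of_mem hx]
      intro h0
      have h0' : ‖f x‖ = B := by linarith [sub_eq_zero.mp h0]
      linarith [hx.1]
    have hnull : ν {x | G x ≠ 0} = 0 := by
      rwa [Filter.EventuallyEq, ae_iff] at hae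
    exact le_antisymm (hsub.trans_eq hnull) zero_le
  have hsub : {x | B < ‖f x‖} ⊆ ⋃ k : ℕ, E k := by
    intro x hx
    obtain ⟨k, hk⟩ := exists_nat_ge (‖f x‖)
    exact Set.mem_iUnion.mpr ⟨k, hx, hk⟩
  have hnull : ν {x | B < ‖f x‖} = 0 :=
    le_antisymm ((measure_mono hsub).trans
      (by rw [measure_iUnion_null_iff.mpr hEnull])) zero_le
  rw [ae_iff]
  convert hnull using 2
  ext x
  simp [not_le]

theorem stmt15 {X : Type*} [MeasurableSpace X]
    (ν μ μac μbar : Measure X) [IsFiniteMeasure ν] [IsFiniteMeasure μ]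
    (η : ℕ → X → ℂ) (B : ℝ)
    (hηm : ∀ n, Measurable (η n)) (hηb : ∀ n x, ‖η n x‖ ≤ B)
    (f g : X → ℂ) (hf : Measurable f) (hg : Measurable g)
    (hν : ∀ φ : X → ℂ, Integrable φ ν →
      Tendsto (fun n => ∫ x, η n x * φ x ∂ν) atTop (nhds (∫ x, f x * φ x ∂ν)))
    (hμ : ∀ φ : X → ℂ, Integrable φ μ →
      Tendsto (fun n => ∫ x, η n x * φ x ∂μ) atTop (nhds (∫ x, g x * φ x ∂μ)))
    (hdec : μ = μac + μbar) (hac : μac ≪ ν)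
    (hperp : Measure.MutuallySingular μac μbar) :
    f =ᵐ[μac] g := by
  by_cases hX : Nonempty X
  swap
  · exact Filter.Eventually.of_forall fun x => absurd ⟨x⟩ hX
  have hB : 0 ≤ B := le_trans (norm_nonneg _) (hηb 0 hX.some)
  have hle1 : μac ≤ μ := by rw [hdec]; exact Measure.le_add_right le_rfl
  haveI : IsFiniteMeasure μac := isFiniteMeasure_of_le μ hle1
  have hacμ : μac ≪ μ := Measure.absolutelyContinuous_of_le hle1
  -- a.e. bounds on f and g
  have hfB : ∀ᵐ x ∂μac, ‖f x‖ ≤ B :=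
    hac.ae_le (weakstar_limit_bdd ν η B hηb f hf hν)
  have hgBμ : ∀ᵐ x ∂μ, ‖g x‖ ≤ B := weakstar_limit_bdd μ η B hηb g hg hμ
  have hgB : ∀ᵐ x ∂μac, ‖g x‖ ≤ B := hacμ.ae_le hgBμ
  -- singular set
  obtain ⟨s, hsm, hs1, hs2⟩ := hperp
  set T : Set X := sᶜ with hT
  have hTm : MeasurableSet T := hsm.compl
  have hTbar : μbar T = 0 := hs2
  have hTac : μac Tᶜ = 0 := by rw [hT, compl_compl]; exact hs1
  -- test function
  set d : X → ℂ := fun x => f x - g x with hd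
  have hdm : Measurable d := hf.sub hg
  set φ : X → ℂ := T.indicator
    (fun x => (starRingEnd ℂ) (d x) / ((‖d x‖ : ℝ) : ℂ)) with hφ
  have hφm : Measurable φ :=
    ((Complex.continuous_conj.measurable.comp hdm).div
      (Complex.measurable_ofReal.comp hdm.norm)).indicator hTm
  have hφb : ∀ x, ‖φ x‖ ≤ 1 := by
    intro x
    by_cases hx : x ∈ T
    · rw [hφ, Set.indicator_of_mem hx, norm_div, RCLike.norm_conj]
      simp only [Complex.norm_real, Real.norm_eq_abs,
        abs_of_nonneg (norm_nonneg (d x))]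
      exact div_self_le_one (‖d x‖)
    · simp [hφ, Set.indicator_of_notMem hx]
  have hφ0bar : φ =ᵐ[μbar] 0 := by
    rw [Filter.EventuallyEq, ae_iff]
    refine le_antisymm (le_trans (measure_mono ?_) hTbar.le) zero_le
    intro x hx
    by_contra hxT
    exact hx (by simp [hφ, Set.indicator_of_notMem hxT])
  -- splitting lemma
  have hsplit : ∀ F : X → ℂ, Integrable (fun x => F x * φ x) μ →
      ∫ x, F x * φ x ∂μ = ∫ x, F x * φ x ∂μac := by
    intro F hFint
    rw [hdec] at hFint
    obtain ⟨h1, h2⟩ := integrable_add_measure.mp hFint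
    rw [hdec, integral_add_measure h1 h2]
    have hz : ∫ x, F x * φ x ∂μbar = 0 :=
      integral_eq_zero_of_ae (hφ0bar.mono fun x hx => by simp [hx])
    rw [hz, add_zero]
  -- rn derivative transfer
  set h : X → ℝ := fun x => (μac.rnDeriv ν x).toReal with hh
  have hhm : Measurable h := (Measure.measurable_rnDeriv μac ν).ennreal_toReal
  have hhnn : ∀ x, 0 ≤ h x := fun x => ENNReal.toReal_nonneg
  have hhint : Integrable h ν := Measure.integrable_toReal_rnDeriv
  set ψ : X → ℂ := fun x => ((h x : ℝ) : ℂ) * φ x with hψ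
  have hψm : Measurable ψ := (Complex.measurable_ofReal.comp hhm).mul hφm
  have hψint : Integrable ψ ν := by
    apply Integrable.mono' hhint hψm.aestronglyMeasurable
    apply Filter.Eventually.of_forall
    intro x
    rw [hψ]
    calc ‖((h x : ℝ) : ℂ) * φ x‖ = ‖((h x : ℝ) : ℂ)‖ * ‖φ x‖ := norm_mul _ _
      _ ≤ h x * 1 := by
          have h1 : ‖((h x : ℝ) : ℂ)‖ = h x := by
            rw [Complex.norm_real, Real.norm_eq_abs, abs_of_nonneg (hhnn x)]
          rw [h1]
          exact mul_le_mul_of_nonneg_left (hφb x) (hhnn x)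
      _ = h x := mul_one _
  have hrn : ∀ F : X → ℂ, ∫ x, F x * ψ x ∂ν = ∫ x, F x * φ x ∂μac := by
    intro F
    rw [← MeasureTheory.integral_rnDeriv_smul hac (f := fun x => F x * φ x)]
    congr 1
    ext x
    rw [hψ, Complex.real_smul]
    ring
  -- integrability of η n * φ wrt μ
  have hηφint : ∀ n, Integrable (fun x => η n x * φ x) μ := by
    intro n
    apply Integrable.mono' (integrable_const B) ((hηm n).mul hφm).aestronglyMeasurable
    apply Filter.Eventually.of_forall
    intro x
    rw [Pi.mul_apply, norm_mul]
    calc ‖η n x‖ * ‖φ x‖ ≤ B * 1 := mul_le_mul (hηb n x) (hφb x) (norm_nonneg _) hB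
      _ = B := mul_one B
  have hgφint : Integrable (fun x => g x * φ x) μ := by
    apply Integrable.mono' (integrable_const B) (hg.mul hφm).aestronglyMeasurable
    apply hgBμ.mono
    intro x hx
    rw [Pi.mul_apply, norm_mul]
    calc ‖g x‖ * ‖φ x‖ ≤ B * 1 := mul_le_mul hx (hφb x) (norm_nonneg _) hB
      _ = B := mul_one B
  -- limit 1 : ∫ η n φ dμac → ∫ g φ dμac
  have l1 : Tendsto (fun n => ∫ x, η n x * φ x ∂μac) atTop (nhds (∫ x, g x * φ x ∂μac)) := by
    have := hμ φ (Integrable.mono' (integrable_const 1) hφm.aestronglyMeasurable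
      (Filter.Eventually.of_forall hφb))
    have heq : (fun n => ∫ x, η n x * φ x ∂μ) = fun n => ∫ x, η n x * φ x ∂μac := by
      funext n; exact hsplit (η n) (hηφint n)
    rw [heq, hsplit g hgφint] at this
    exact this
  -- limit 2 : ∫ η n φ dμac → ∫ f φ dμac
  have l2 : Tendsto (fun n => ∫ x, η n x * φ x ∂μac) atTop (nhds (∫ x, f x * φ x ∂μac)) := by
    have := hν ψ hψint
    have heq : (fun n => ∫ x, η n x * ψ x ∂ν) = fun n => ∫ x, η n x * φ x ∂μac := by
      funext n; exact hrn (η n)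
    rw [heq, hrn f] at this
    exact this
  have hkey : ∫ x, f x * φ x ∂μac = ∫ x, g x * φ x ∂μac := tendsto_nhds_unique l2 l1
  -- integrability wrt μac
  have hintf : Integrable (fun x => f x * φ x) μac := by
    apply Integrable.mono' (integrable_const B) (hf.mul hφm).aestronglyMeasurable
    apply hfB.mono
    intro x hx
    rw [Pi.mul_apply, norm_mul]
    calc ‖f x‖ * ‖φ x‖ ≤ B * 1 := mul_le_mul hx (hφb x) (norm_nonneg _) hB
      _ = B := mul_one B
  have hintg : Integrable (fun x => g x * φ x) μac := by
    apply Integrable.mono' (integrable_const B) (hg.mul hφm).aestronglyMeasurable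
    apply hgB.mono
    intro x hx
    rw [Pi.mul_apply, norm_mul]
    calc ‖g x‖ * ‖φ x‖ ≤ B * 1 := mul_le_mul hx (hφb x) (norm_nonneg _) hB
      _ = B := mul_one B
  have hzero : ∫ x, d x * φ x ∂μac = 0 := by
    have heq : (fun x => d x * φ x) = fun x => f x * φ x - g x * φ x := by
      funext x; rw [hd]; ring
    rw [heq, integral_sub hintf hintg, hkey, sub_self]
  -- pointwise identity
  have hfφ : ∀ x, d x * φ x = T.indicator (fun x => ((‖d x‖ : ℝ) : ℂ)) x := by
    intro x
    by_cases hx : x ∈ T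
    · simp only [hφ, Set.indicator_of_mem hx]
      by_cases hdx : d x = 0
      · simp [hdx]
      · rw [mul_div_assoc', Complex.mul_conj, Complex.normSq_eq_norm_sq]
        have habs : (‖d x‖ : ℂ) ≠ 0 := by simp [hdx]
        field_simp
        push_cast; ring
    · simp [hφ, Set.indicator_of_notMem hx]
  set r : X → ℝ := T.indicator (fun x => ‖d x‖) with hr
  have hcomm : ∀ x, T.indicator (fun x => ((‖d x‖ : ℝ) : ℂ)) x = ((r x : ℝ) : ℂ) := by
    intro x
    by_cases hx : x ∈ T <;> simp [hr, Set.indicator_of_mem, Set.indicator_of_notMem, hx]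
  have hrzero : ∫ x, r x ∂μac = 0 := by
    have : ∫ x, d x * φ x ∂μac = ((∫ x, r x ∂μac : ℝ) : ℂ) := by
      simp_rw [hfφ, hcomm]
      exact integral_ofReal
    rw [hzero] at this
    exact_mod_cast this.symm
  have hrnn : ∀ x, 0 ≤ r x := by
    intro x
    by_cases hx : x ∈ T
    · rw [hr, Set.indicator_of_mem hx]; exact norm_nonneg _
    · rw [hr, Set.indicator_of_notMem hx]
  have hrint : Integrable r μac := by
    apply Integrable.mono' (integrable_const (B + B))
      (hdm.norm.indicator hTm).aestronglyMeasurable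
    filter_upwards [hfB, hgB] with x hx1 hx2
    show ‖r x‖ ≤ B + B
    by_cases hx : x ∈ T
    · rw [hr, Set.indicator_of_mem hx, Real.norm_eq_abs, abs_of_nonneg (norm_nonneg _)]
      calc ‖d x‖ ≤ ‖f x‖ + ‖g x‖ := norm_sub_le _ _
        _ ≤ B + B := add_le_add hx1 hx2
    · rw [hr, Set.indicator_of_notMem hx, norm_zero]
      linarith
  have hrae : r =ᵐ[μac] 0 := (integral_eq_zero_iff_of_nonneg hrnn hrint).mp hrzero
  have hrnull : μac {x | r x ≠ 0} = 0 := by rwa [Filter.EventuallyEq, ae_iff] at hrae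
  rw [Filter.EventuallyEq, ae_iff]
  have hsub : {x | ¬ f x = g x} ⊆ {x | r x ≠ 0} ∪ Tᶜ := by
    intro x hx
    by_cases hxT : x ∈ T
    · left
      simp only [Set.mem_setOf_eq, hr, Set.indicator_of_mem hxT]
      simp only [ne_eq, norm_eq_zero, hd]
      rw [sub_eq_zero]
      exact hx
    · right; exact hxT
  refine le_antisymm (le_trans (measure_mono hsub) ?_) zero_le
  calc μac ({x | r x ≠ 0} ∪ Tᶜ) ≤ μac {x | r x ≠ 0} + μac Tᶜ := measure_union_le _ _
    _ = 0 := by rw [hrnull, hTac, add_zero]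
end

section
/- Let $(X, \mathfrak{S})$ be a measurable space, $\mu_1, \dotsc, \mu_K$ finite positive measures on it, and $(\eta_n)$ a sequence of bounded complex-valued measurable functions such that for each $k$ there is a measurable $\bar\eta_k$ with $\eta_n \to \bar\eta_k$ weak-* in $L^\infty(X, \mu_k)$. Then there exists a single measurable function $\bar\eta$ such that $\bar\eta = \bar\eta_k$ $\mu_k$-almost everywhere for every $k \in \{1, \dotsc, K\}$. -/
open MeasureTheory Filter Set

private lemma mul_csgn (z : ℂ) :
    z * (if z = 0 then 0 else (starRingEnd ℂ) z / (‖z‖ : ℂ)) = (‖z‖ : ℂ) := by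
  split_ifs with h
  · simp [h]
  · rw [div_eq_mul_inv, ← mul_assoc, Complex.mul_conj]
    have hz : ‖z‖ ≠ 0 := by simpa using h
    rw [Complex.normSq_eq_norm_sq, sq]
    push_cast
    rw [mul_assoc, mul_inv_cancel₀ (by exact_mod_cast hz), mul_one]

private lemma norm_csgn_le (z : ℂ) :
    ‖(if z = 0 then 0 else (starRingEnd ℂ) z / (‖z‖ : ℂ))‖ ≤ 1 := by
  split_ifs with h
  · simp
  · have hz : ‖z‖ ≠ 0 := by simpa using h
    rw [norm_div, RingHomIsometric.norm_map]
    rw [Complex.norm_real, norm_norm, div_self hz]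

private lemma measurable_csgn {X : Type*} [MeasurableSpace X] {a : X → ℂ} (ha : Measurable a) :
    Measurable fun x => (if a x = 0 then 0 else (starRingEnd ℂ) (a x) / (‖a x‖ : ℂ)) := by
  refine Measurable.ite (ha (measurableSet_singleton 0)) measurable_const ?_
  have h1 : Measurable fun x => (starRingEnd ℂ) (a x) := by
    exact Complex.continuous_conj.measurable.comp ha
  exact h1.div (Complex.measurable_ofReal.comp ha.norm)

private lemma aeBound {X : Type*} [MeasurableSpace X] (μ : Measure X) [IsFiniteMeasure μ]
    {a : X → ℂ} (ha : Measurable a) {B : ℝ}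
    (h : ∀ t : Set X, MeasurableSet t → ‖∫ x in t, ((‖a x‖ : ℝ) : ℂ) ∂μ‖ ≤ B * (μ t).toReal) :
    ∀ᵐ x ∂μ, ‖a x‖ ≤ B := by
  have key : ∀ m M : ℕ, μ ({x | B + 1/(m+1) ≤ ‖a x‖} ∩ {x | ‖a x‖ ≤ M}) = 0 := by
    intro m M
    set t := {x | B + 1/(m+1) ≤ ‖a x‖} ∩ {x | ‖a x‖ ≤ (M:ℝ)} with ht_def
    have htm : MeasurableSet t :=
      (measurableSet_le measurable_const ha.norm).inter (measurableSet_le ha.norm measurable_const)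
    have hint : IntegrableOn (fun x => ‖a x‖) t μ := by
      refine ⟨ha.norm.aestronglyMeasurable, HasFiniteIntegral.of_bounded (C := (M:ℝ)) ?_⟩
      exact (ae_restrict_mem htm).mono fun x hx => by
        simpa [Real.norm_eq_abs, abs_of_nonneg (norm_nonneg _)] using hx.2
    have h1 : (B + 1/(m+1)) * (μ t).toReal ≤ ∫ x in t, ‖a x‖ ∂μ :=
      setIntegral_ge_of_const_le_real htm (measure_ne_top μ t) (fun x hx => hx.1) hint
    have h2 : ∫ x in t, ‖a x‖ ∂μ ≤ B * (μ t).toReal := by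
      have h3 := h t htm
      have h4 : ∫ x in t, ((‖a x‖ : ℝ) : ℂ) ∂μ = ((∫ x in t, ‖a x‖ ∂μ : ℝ) : ℂ) :=
        integral_ofReal
      rw [h4] at h3
      calc ∫ x in t, ‖a x‖ ∂μ ≤ ‖((∫ x in t, ‖a x‖ ∂μ : ℝ) : ℂ)‖ := by
            rw [Complex.norm_real]; exact le_abs_self _
        _ ≤ B * (μ t).toReal := h3
    have hpos : (0:ℝ) < 1/(m+1) := by positivity
    have htr : (μ t).toReal = 0 := by nlinarith [ENNReal.toReal_nonneg (a := μ t)]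
    exact (ENNReal.toReal_eq_zero_iff _).mp htr |>.resolve_right (measure_ne_top μ t)
  have hsub : {x | ¬ ‖a x‖ ≤ B} ⊆
      ⋃ (m : ℕ) (M : ℕ), ({x | B + 1/(m+1) ≤ ‖a x‖} ∩ {x | ‖a x‖ ≤ (M:ℝ)}) := by
    intro x hx
    simp only [mem_setOf_eq, not_le] at hx
    obtain ⟨m, hm⟩ := exists_nat_one_div_lt (sub_pos.mpr hx)
    obtain ⟨M, hM⟩ := exists_nat_ge ‖a x‖
    refine mem_iUnion.mpr ⟨m, mem_iUnion.mpr ⟨M, ⟨?_, hM⟩⟩⟩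
    simp only [mem_setOf_eq]
    linarith
  rw [ae_iff]
  exact measure_mono_null hsub
    (measure_iUnion_null fun m => measure_iUnion_null fun M => key m M)

private lemma boundFromTests {X : Type*} [MeasurableSpace X] (μ : Measure X) [IsFiniteMeasure μ]
    {η : ℕ → X → ℂ} {B : ℝ} (hB : 0 ≤ B) (hηm : ∀ n, Measurable (η n))
    (hηb : ∀ n x, ‖η n x‖ ≤ B) {a : X → ℂ} (ham : Measurable a)
    (hc : ∀ φ : X → ℂ, Measurable φ → (∀ x, ‖φ x‖ ≤ 1) →
      Tendsto (fun n => ∫ x, η n x * φ x ∂μ) atTop (nhds (∫ x, a x * φ x ∂μ))) :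
    ∀ᵐ x ∂μ, ‖a x‖ ≤ B := by
  refine aeBound μ ham ?_
  intro t ht
  set u : X → ℂ := fun x => (if a x = 0 then 0 else (starRingEnd ℂ) (a x) / (‖a x‖ : ℂ)) with hu
  set φ : X → ℂ := t.indicator u with hφ
  have hφm : Measurable φ := (measurable_csgn ham).indicator ht
  have hφ1 : ∀ x, ‖φ x‖ ≤ 1 := by
    intro x
    rw [hφ]
    by_cases hx : x ∈ t
    · rw [indicator_of_mem hx]; exact norm_csgn_le _
    · rw [indicator_of_notMem hx]; simp
  have hlim := hc φ hφm hφ1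
  have hkey : ∀ x, a x * φ x = t.indicator (fun x => ((‖a x‖ : ℝ) : ℂ)) x := by
    intro x
    by_cases hx : x ∈ t
    · rw [hφ, indicator_of_mem hx, indicator_of_mem hx, hu]; exact mul_csgn _
    · rw [hφ, indicator_of_notMem hx, indicator_of_notMem hx, mul_zero]
  have heq : ∫ x, a x * φ x ∂μ = ∫ x in t, ((‖a x‖ : ℝ) : ℂ) ∂μ := by
    rw [show (fun x => a x * φ x) = t.indicator (fun x => ((‖a x‖ : ℝ) : ℂ)) from funext hkey]
    exact integral_indicator ht
  rw [← heq]
  have hbd : ∀ n, ‖∫ x, η n x * φ x ∂μ‖ ≤ B * (μ t).toReal := by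
    intro n
    have : ∀ x, η n x * φ x = t.indicator (fun x => η n x * u x) x := by
      intro x
      by_cases hx : x ∈ t
      · rw [hφ, indicator_of_mem hx, indicator_of_mem hx]
      · rw [hφ, indicator_of_notMem hx, indicator_of_notMem hx, mul_zero]
    rw [show (fun x => η n x * φ x) = t.indicator (fun x => η n x * u x) from funext this,
      integral_indicator ht]
    refine norm_setIntegral_le_of_norm_le_const (measure_lt_top μ t) (fun x _ => ?_)
    · calc ‖η n x * u x‖ = ‖η n x‖ * ‖u x‖ := norm_mul _ _
        _ ≤ B * 1 := mul_le_mul (hηb n x) (norm_csgn_le _) (norm_nonneg _) hB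
        _ = B := mul_one B
  exact le_of_tendsto' hlim.norm hbd

private lemma coreLemma {X : Type*} [MeasurableSpace X] {μ ν : Measure X}
    [IsFiniteMeasure μ] [IsFiniteMeasure ν] (hμν : μ ≪ ν)
    {η : ℕ → X → ℂ} {B : ℝ} (hB : 0 ≤ B) (hηm : ∀ n, Measurable (η n))
    (hηb : ∀ n x, ‖η n x‖ ≤ B)
    {a b : X → ℂ} (ham : Measurable a) (hbm : Measurable b)
    (hca : ∀ φ : X → ℂ, Measurable φ → (∀ x, ‖φ x‖ ≤ 1) →
      Tendsto (fun n => ∫ x, η n x * φ x ∂μ) atTop (nhds (∫ x, a x * φ x ∂μ)))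
    (hcb : ∀ φ : X → ℂ, Integrable φ ν →
      Tendsto (fun n => ∫ x, η n x * φ x ∂ν) atTop (nhds (∫ x, b x * φ x ∂ν))) :
    a =ᵐ[μ] b := by
  have hcb' : ∀ φ : X → ℂ, Measurable φ → (∀ x, ‖φ x‖ ≤ 1) →
      Tendsto (fun n => ∫ x, η n x * φ x ∂ν) atTop (nhds (∫ x, b x * φ x ∂ν)) :=
    fun φ hφm hφ1 => hcb φ ⟨hφm.aestronglyMeasurable,
      HasFiniteIntegral.of_bounded (ae_of_all ν hφ1)⟩
  have hBa : ∀ᵐ x ∂μ, ‖a x‖ ≤ B := boundFromTests μ hB hηm hηb ham hca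
  have hBb : ∀ᵐ x ∂ν, ‖b x‖ ≤ B := boundFromTests ν hB hηm hηb hbm hcb'
  have hBbμ : ∀ᵐ x ∂μ, ‖b x‖ ≤ B := hμν.ae_le hBb
  have hia : Integrable a μ := ⟨ham.aestronglyMeasurable, HasFiniteIntegral.of_bounded hBa⟩
  have hib : Integrable b μ := ⟨hbm.aestronglyMeasurable, HasFiniteIntegral.of_bounded hBbμ⟩
  refine Integrable.ae_eq_of_forall_setIntegral_eq a b hia hib ?_
  intro t ht _
  -- test function 1: indicator of t
  set φ1 : X → ℂ := t.indicator 1 with hφ1def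
  have hφ1m : Measurable φ1 := measurable_one.indicator ht
  have hφ11 : ∀ x, ‖φ1 x‖ ≤ 1 := by
    intro x
    rw [hφ1def]
    by_cases hx : x ∈ t
    · rw [indicator_of_mem hx]; simp
    · rw [indicator_of_notMem hx]; simp
  have hmulind : ∀ g : X → ℂ, ∀ x, g x * φ1 x = t.indicator g x := by
    intro g x
    by_cases hx : x ∈ t
    · rw [hφ1def, indicator_of_mem hx, indicator_of_mem hx, Pi.one_apply, mul_one]
    · rw [hφ1def, indicator_of_notMem hx, indicator_of_notMem hx, mul_zero]
  have hlimA : Tendsto (fun n => ∫ x, η n x * φ1 x ∂μ) atTop (nhds (∫ x in t, a x ∂μ)) := by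
    have := hca φ1 hφ1m hφ11
    rwa [show (fun x => a x * φ1 x) = t.indicator a from funext (hmulind a),
      integral_indicator ht] at this
  -- test function 2: rnDeriv smeared indicator
  set f : X → ℝ := fun x => (μ.rnDeriv ν x).toReal with hfdef
  have hfint : Integrable f ν := Measure.integrable_toReal_rnDeriv
  set φ2 : X → ℂ := fun x => (f x : ℂ) * φ1 x with hφ2def
  have hφ2int : Integrable φ2 ν := by
    have : Integrable (fun x => (f x : ℂ)) ν := hfint.ofReal
    exact (this.bdd_mul (c := 1) hφ1m.aestronglyMeasurable (ae_of_all ν hφ11)).congr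
      (ae_of_all ν fun x => mul_comm _ _)
  have hsmul : ∀ g : X → ℂ, ∀ x, g x * φ2 x = f x • (g x * φ1 x) := by
    intro g x
    rw [hφ2def, Complex.real_smul]
    ring
  have hlimB : Tendsto (fun n => ∫ x, η n x * φ1 x ∂μ) atTop (nhds (∫ x in t, b x ∂μ)) := by
    have h0 := hcb φ2 hφ2int
    have hrw : ∀ g : X → ℂ, ∫ x, g x * φ2 x ∂ν = ∫ x, g x * φ1 x ∂μ := by
      intro g
      rw [show (fun x => g x * φ2 x) = fun x => f x • (g x * φ1 x) from funext (hsmul g)]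
      exact MeasureTheory.integral_rnDeriv_smul hμν
    simp only [hrw] at h0
    rwa [show (fun x => b x * φ1 x) = t.indicator b from funext (hmulind b),
      integral_indicator ht] at h0
  exact tendsto_nhds_unique hlimA hlimB

private lemma mainAux {X : Type*} [MeasurableSpace X] {η : ℕ → X → ℂ} {B : ℝ} (hB : 0 ≤ B)
    (hηm : ∀ n, Measurable (η n)) (hηb : ∀ n x, ‖η n x‖ ≤ B) :
    ∀ (K : ℕ) (μ : Fin K → Measure X), (∀ k, IsFiniteMeasure (μ k)) →
    ∀ (ηbar : Fin K → X → ℂ), (∀ k, Measurable (ηbar k)) →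
    (∀ k, ∀ φ : X → ℂ, Integrable φ (μ k) →
      Tendsto (fun n => ∫ x, η n x * φ x ∂(μ k)) atTop
        (nhds (∫ x, ηbar k x * φ x ∂(μ k)))) →
    ∃ e : X → ℂ, Measurable e ∧ (∀ x, ‖e x‖ ≤ B) ∧ ∀ k, e =ᵐ[μ k] ηbar k := by
  intro K
  induction K with
  | zero =>
    intro μ _ ηbar _ _
    exact ⟨0, measurable_const, fun x => by simpa using hB, fun k => k.elim0⟩
  | succ K ih =>
    intro μ hfin ηbar hηbarm hconv
    classical
    haveI := hfin
    obtain ⟨e', he'm, he'b, he'⟩ := ih (fun j => μ j.castSucc) (fun j => hfin _)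
      (fun j => ηbar j.castSucc) (fun j => hηbarm _) (fun j => hconv _)
    set ν : Measure X := ∑ j : Fin K, μ j.castSucc with hνdef
    haveI hνfin : IsFiniteMeasure ν := by
      constructor
      rw [hνdef, Measure.finset_sum_apply]
      exact ENNReal.sum_lt_top.mpr fun j _ => measure_lt_top _ _
    have hμjle : ∀ j : Fin K, μ j.castSucc ≤ ν := by
      intro j
      rw [hνdef, Measure.le_iff]
      intro t htm
      rw [Measure.finset_sum_apply]
      exact Finset.single_le_sum (f := fun i : Fin K => μ i.castSucc t)
        (fun i _ => zero_le) (Finset.mem_univ j)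
    set μK : Measure X := μ (Fin.last K) with hμKdef
    have hsing : μK.singularPart ν ⟂ₘ ν := Measure.mutuallySingular_singularPart μK ν
    set s : Set X := (hsing.nullSet)ᶜ with hsdef
    have hsm : MeasurableSet s := hsing.measurableSet_nullSet.compl
    have hνs : ν s = 0 := hsing.measure_compl_nullSet
    have hrest : μK.restrict sᶜ ≪ ν := by
      refine Measure.AbsolutelyContinuous.mk fun t htm hνt => ?_
      rw [Measure.restrict_apply htm]
      have hdec : μK (t ∩ sᶜ) =
          μK.singularPart ν (t ∩ sᶜ) + ν.withDensity (μK.rnDeriv ν) (t ∩ sᶜ) := by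
        conv_lhs => rw [μK.haveLebesgueDecomposition_add ν]
        rfl
      have h1 : μK.singularPart ν (t ∩ sᶜ) = 0 := by
        refine measure_mono_null ?_ hsing.measure_nullSet
        rw [hsdef, compl_compl]
        exact inter_subset_right
      have h2 : ν.withDensity (μK.rnDeriv ν) (t ∩ sᶜ) = 0 :=
        measure_mono_null inter_subset_left ((withDensity_absolutelyContinuous ν _) hνt)
      rw [hdec, h1, h2, add_zero]
    -- convergence w.r.t. μK.restrict sᶜ with bounded tests
    have hcρ : ∀ φ : X → ℂ, Measurable φ → (∀ x, ‖φ x‖ ≤ 1) →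
        Tendsto (fun n => ∫ x, η n x * φ x ∂(μK.restrict sᶜ)) atTop
          (nhds (∫ x, ηbar (Fin.last K) x * φ x ∂(μK.restrict sᶜ))) := by
      intro φ hφm hφ1
      have hrw : ∀ g : X → ℂ, ∫ x, g x * φ x ∂(μK.restrict sᶜ)
          = ∫ x, g x * (sᶜ.indicator φ) x ∂μK := by
        intro g
        rw [← integral_indicator hsm.compl]
        congr 1
        funext x
        by_cases hx : x ∈ sᶜ
        · rw [indicator_of_mem hx, indicator_of_mem hx]
        · rw [indicator_of_notMem hx, indicator_of_notMem hx, mul_zero]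
      have hint : Integrable (sᶜ.indicator φ) μK := by
        refine ⟨(hφm.indicator hsm.compl).aestronglyMeasurable,
          HasFiniteIntegral.of_bounded (C := 1) (ae_of_all _ fun x => ?_)⟩
        by_cases hx : x ∈ sᶜ
        · rw [indicator_of_mem hx]; exact hφ1 x
        · rw [indicator_of_notMem hx]; simp
      have := hconv (Fin.last K) (sᶜ.indicator φ) hint
      rw [← hμKdef] at this
      simp only [← hrw] at this
      exact this
    -- convergence w.r.t. ν with integrable tests, towards e'
    have hcν : ∀ φ : X → ℂ, Integrable φ ν →
        Tendsto (fun n => ∫ x, η n x * φ x ∂ν) atTop (nhds (∫ x, e' x * φ x ∂ν)) := by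
      intro φ hφint
      have hφj : ∀ j : Fin K, Integrable φ (μ j.castSucc) :=
        fun j => hφint.mono_measure (hμjle j)
      have hηφ : ∀ n (j : Fin K), Integrable (fun x => η n x * φ x) (μ j.castSucc) :=
        fun n j => (hφj j).bdd_mul (hηm n).aestronglyMeasurable (ae_of_all _ (hηb n))
      have he'φ : ∀ j : Fin K, Integrable (fun x => e' x * φ x) (μ j.castSucc) :=
        fun j => (hφj j).bdd_mul he'm.aestronglyMeasurable (ae_of_all _ he'b)
      have hsum : ∀ n, ∫ x, η n x * φ x ∂ν
          = ∑ j : Fin K, ∫ x, η n x * φ x ∂(μ j.castSucc) := by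
        intro n
        rw [hνdef]
        exact integral_finset_sum_measure fun j _ => hηφ n j
      have hsum' : ∫ x, e' x * φ x ∂ν
          = ∑ j : Fin K, ∫ x, e' x * φ x ∂(μ j.castSucc) := by
        rw [hνdef]
        exact integral_finset_sum_measure fun j _ => he'φ j
      rw [hsum']
      simp only [hsum]
      refine tendsto_finset_sum _ fun j _ => ?_
      have := hconv j.castSucc φ (hφj j)
      have heq : ∫ x, ηbar j.castSucc x * φ x ∂(μ j.castSucc)
          = ∫ x, e' x * φ x ∂(μ j.castSucc) :=
        integral_congr_ae (((he' j).symm).mul (Filter.EventuallyEq.refl _ φ))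
      rwa [heq] at this
    haveI : IsFiniteMeasure (μK.restrict sᶜ) := inferInstance
    have hkey : ηbar (Fin.last K) =ᵐ[μK.restrict sᶜ] e' :=
      coreLemma hrest hB hηm hηb (hηbarm (Fin.last K)) he'm hcρ hcν
    -- build e
    set e₀ : X → ℂ := fun x => if x ∈ s then ηbar (Fin.last K) x else e' x with he₀def
    have he₀m : Measurable e₀ := by
      rw [he₀def]
      exact Measurable.ite hsm (hηbarm _) he'm
    set e : X → ℂ := fun x => if ‖e₀ x‖ ≤ B then e₀ x else 0 with hedef
    have hem : Measurable e := Measurable.ite (measurableSet_le he₀m.norm measurable_const)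
      he₀m measurable_const
    have heb : ∀ x, ‖e x‖ ≤ B := by
      intro x
      simp only [hedef]
      split_ifs with hx
      · exact hx
      · simpa using hB
    refine ⟨e, hem, heb, ?_⟩
    -- bounds for ηbar k a.e.
    have hbarb : ∀ k, ∀ᵐ x ∂(μ k), ‖ηbar k x‖ ≤ B := by
      intro k
      refine boundFromTests (μ k) hB hηm hηb (hηbarm k) (fun φ hφm hφ1 => ?_)
      exact hconv k φ ⟨hφm.aestronglyMeasurable, HasFiniteIntegral.of_bounded (ae_of_all _ hφ1)⟩
    have he₀ae : ∀ k, e₀ =ᵐ[μ k] ηbar k := by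
      intro k
      induction k using Fin.lastCases with
      | last =>
        have h1 : ∀ᵐ x ∂μK, x ∈ sᶜ → ηbar (Fin.last K) x = e' x :=
          ae_imp_of_ae_restrict hkey
        filter_upwards [h1] with x hx
        simp only [he₀def]
        by_cases hxs : x ∈ s
        · rw [if_pos hxs]
        · rw [if_neg hxs]
          exact (hx hxs).symm
      | cast j =>
        have hμjs : μ j.castSucc s = 0 :=
          le_antisymm (le_trans (hμjle j s) (le_of_eq hνs)) zero_le
        have h1 : ∀ᵐ x ∂(μ j.castSucc), x ∉ s := by
          rw [ae_iff]
          simpa using hμjs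
        filter_upwards [h1, he' j] with x hx hx2
        simp only [he₀def]
        rw [if_neg hx]
        exact hx2
    intro k
    filter_upwards [he₀ae k, hbarb k] with x hx hxb
    simp only [hedef]
    rw [hx, if_pos hxb]

theorem stmt16 {X : Type*} [MeasurableSpace X] (K : ℕ)
    (μ : Fin K → Measure X) [∀ k, IsFiniteMeasure (μ k)]
    (η : ℕ → X → ℂ) (B : ℝ)
    (hηm : ∀ n, Measurable (η n)) (hηb : ∀ n x, ‖η n x‖ ≤ B)
    (ηbar : Fin K → X → ℂ) (hηbarm : ∀ k, Measurable (ηbar k))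
    (hconv : ∀ k, ∀ φ : X → ℂ, Integrable φ (μ k) →
      Tendsto (fun n => ∫ x, η n x * φ x ∂(μ k)) atTop
        (nhds (∫ x, ηbar k x * φ x ∂(μ k)))) :
    ∃ e : X → ℂ, Measurable e ∧ ∀ k, e =ᵐ[μ k] ηbar k := by
  have hηb' : ∀ n x, ‖η n x‖ ≤ max B 0 := fun n x =>
    le_trans (by exact hηb n x) (le_max_left _ _)
  obtain ⟨e, hem, -, he⟩ := mainAux (le_max_right B 0) hηm hηb' K μ
    (fun k => inferInstance) ηbar hηbarm hconv
  exact ⟨e, hem, he⟩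
end

section
/- Define $\mathcal{L}$ as the set of normalized bounded-variation functions $M \colon [-1,0] \to \mathcal{M}_d(\mathbb{R})$ with $S_M < +\infty$ and $\inf_{\mathrm{Re}\, s \ge \alpha} |\Delta_M(s)| > 0$ for every $\alpha > S_M$, where $S_M$ is the spectral abscissa of $\Delta_M(s) = \det(I - \int_{-1}^0 e^{s\theta} dM(\theta))$. Then the map $M \mapsto S_M$ is continuous on $\mathcal{L}$ with respect to the total variation norm: if $M \in \mathcal{L}$ with $S_M \in \mathbb{R}$ and $(N_n) \subset \mathcal{L}$ with $\mathrm{Var}(M - N_n) \to 0$, then $S_{N_n} \to S_M$. -/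
open MeasureTheory Set ENNReal NNReal Complex

attribute [local instance] Matrix.normedAddCommGroup Matrix.normedSpace

/-- Lebesgue–Stieltjes-style integral of a complex function against a signed measure,
over the interval `[a,b]`. -/
noncomputable def sInt (a b : ℝ) (s : SignedMeasure ℝ) (ψ : ℝ → ℂ) : ℂ :=
  (∫ θ in Set.Icc a b, ψ θ ∂s.toJordanDecomposition.posPart) -
  (∫ θ in Set.Icc a b, ψ θ ∂s.toJordanDecomposition.negPart)

/-- Entrywise integral of a complex function against a matrix-valued measure. -/
noncomputable def mInt {d : ℕ} (a b : ℝ) (μ : Fin d → Fin d → SignedMeasure ℝ)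
    (ψ : ℝ → ℂ) : Matrix (Fin d) (Fin d) ℂ :=
  Matrix.of fun i j => sInt a b (μ i j) ψ

/-- Characteristic function `Δ(s) = det(I - ∫ e^{sθ} dM(θ))` of the matrix measure `μ`. -/
noncomputable def charFn {d : ℕ} (μ : Fin d → Fin d → SignedMeasure ℝ) (s : ℂ) : ℂ :=
  Matrix.det (1 - mInt (-1) 0 μ (fun θ => Complex.exp (s * θ)))

/-- The matrix measure `μ` is the measure associated with `M` via `M t = μ([a,t])`. -/
def IsLinked {d : ℕ} (M : ℝ → Matrix (Fin d) (Fin d) ℝ)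
    (μ : Fin d → Fin d → SignedMeasure ℝ) (a b : ℝ) : Prop :=
  ∀ t ∈ Set.Icc a b, ∀ i j, M t i j = μ i j (Set.Icc a t)

/-- `M` is normalized: `M a = 0` and `M` is right-continuous on `(a,b)`. -/
def Normalized {d : ℕ} (M : ℝ → Matrix (Fin d) (Fin d) ℝ) (a b : ℝ) : Prop :=
  M a = 0 ∧ ∀ t ∈ Set.Ioo a b, ContinuousWithinAt M (Set.Ici t) t

/-- Total variation of a matrix-valued measure over finite Borel partitions of `[a,b]`. -/
noncomputable def measVar {d : ℕ} (μ : Fin d → Fin d → SignedMeasure ℝ) (a b : ℝ) : ℝ≥0∞ :=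
  ⨆ p : {p : Σ k : ℕ, Fin k → Set ℝ //
      (∀ i, MeasurableSet (p.2 i)) ∧ (Pairwise fun i j => Disjoint (p.2 i) (p.2 j)) ∧
      (⋃ i, p.2 i) = Set.Icc a b},
    ∑ i, (‖Matrix.of fun r c => (μ r c) (p.1.2 i)‖₊ : ℝ≥0∞)

/-- The Hale–Silkowski quantity `ρ_HS`. -/
noncomputable def rhoHS {d : ℕ} (μ : Fin d → Fin d → SignedMeasure ℝ) : ℝ≥0∞ :=
  ⨆ ξ : {ξ : ℝ → ℝ // Measurable ξ},
    spectralRadius ℂ (mInt (-1) 0 μ (fun θ => Complex.exp (Complex.I * (ξ.1 θ : ℂ))))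

/-- Spectral abscissa of the characteristic function of the matrix measure `μ`. -/
noncomputable def specAbs {d : ℕ} (μ : Fin d → Fin d → SignedMeasure ℝ) : ℝ :=
  sSup {x : ℝ | ∃ s : ℂ, s.re = x ∧ charFn μ s = 0}

/-- Membership in the class `𝓛`. -/
def MemL {d : ℕ} (M : ℝ → Matrix (Fin d) (Fin d) ℝ)
    (μ : Fin d → Fin d → SignedMeasure ℝ) : Prop :=
  Normalized M (-1) 0 ∧ IsLinked M μ (-1) 0 ∧
  eVariationOn M (Set.Icc (-1) 0) ≠ ⊤ ∧
  BddAbove {x : ℝ | ∃ s : ℂ, s.re = x ∧ charFn μ s = 0} ∧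
  ∀ α > specAbs μ, ∃ c > 0, ∀ s : ℂ, α ≤ s.re → c ≤ ‖charFn μ s‖

lemma sm_apply (s : SignedMeasure ℝ) {E : Set ℝ} (hE : MeasurableSet E) :
    s E = (s.toJordanDecomposition.posPart E).toReal
      - (s.toJordanDecomposition.negPart E).toReal := by
  conv_lhs => rw [← s.toSignedMeasure_toJordanDecomposition]
  rw [MeasureTheory.JordanDecomposition.toSignedMeasure,
    MeasureTheory.Measure.toSignedMeasure_sub_apply hE]
  rfl

lemma int_on (m : Measure ℝ) [IsFiniteMeasure m] {ψ : ℝ → ℂ} (hψ : Continuous ψ)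
    {a b : ℝ} : IntegrableOn ψ (Set.Icc a b) m :=
  ContinuousOn.integrableOn_compact isCompact_Icc hψ.continuousOn

lemma sInt_sub (a b : ℝ) (ν₁ ν₂ : SignedMeasure ℝ) (ψ : ℝ → ℂ) (hψ : Continuous ψ) :
    sInt a b (ν₁ - ν₂) ψ = sInt a b ν₁ ψ - sInt a b ν₂ ψ := by
  set p := (ν₁ - ν₂).toJordanDecomposition.posPart
  set q := (ν₁ - ν₂).toJordanDecomposition.negPart
  set p₁ := ν₁.toJordanDecomposition.posPart
  set q₁ := ν₁.toJordanDecomposition.negPart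
  set p₂ := ν₂.toJordanDecomposition.posPart
  set q₂ := ν₂.toJordanDecomposition.negPart
  have hmeas : p + q₁ + p₂ = q + p₁ + q₂ := by
    ext E hE
    simp only [Measure.coe_add, Pi.add_apply]
    have h1 := sm_apply (ν₁ - ν₂) hE
    have h2 := sm_apply ν₁ hE
    have h3 := sm_apply ν₂ hE
    rw [MeasureTheory.VectorMeasure.sub_apply] at h1
    have hr : (p E).toReal + (q₁ E).toReal + (p₂ E).toReal
        = (q E).toReal + (p₁ E).toReal + (q₂ E).toReal := by
      rw [h2, h3] at h1; linarith
    have hfin : ∀ (m' : Measure ℝ) [IsFiniteMeasure m'], m' E ≠ ⊤ :=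
      fun m' _ => (measure_lt_top m' E).ne
    rw [← ENNReal.toReal_eq_toReal_iff' (by simp [ENNReal.add_ne_top, hfin p, hfin q₁, hfin p₂])
      (by simp [ENNReal.add_ne_top, hfin q, hfin p₁, hfin q₂])]
    rw [ENNReal.toReal_add (by simp [ENNReal.add_ne_top, hfin p, hfin q₁]) (hfin p₂),
      ENNReal.toReal_add (hfin p) (hfin q₁),
      ENNReal.toReal_add (by simp [ENNReal.add_ne_top, hfin q, hfin p₁]) (hfin q₂),
      ENNReal.toReal_add (hfin q) (hfin p₁)]
    exact hr
  have hint : ∀ (m' : Measure ℝ) [IsFiniteMeasure m'], IntegrableOn ψ (Set.Icc a b) m' :=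
    fun m' _ => int_on m' hψ
  have key : (∫ θ in Set.Icc a b, ψ θ ∂p) + (∫ θ in Set.Icc a b, ψ θ ∂q₁)
      + (∫ θ in Set.Icc a b, ψ θ ∂p₂)
      = (∫ θ in Set.Icc a b, ψ θ ∂q) + (∫ θ in Set.Icc a b, ψ θ ∂p₁)
      + (∫ θ in Set.Icc a b, ψ θ ∂q₂) := by
    have e1 : ∫ θ in Set.Icc a b, ψ θ ∂(p + q₁ + p₂)
        = (∫ θ in Set.Icc a b, ψ θ ∂p) + (∫ θ in Set.Icc a b, ψ θ ∂q₁)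
          + (∫ θ in Set.Icc a b, ψ θ ∂p₂) := by
      rw [Measure.restrict_add, Measure.restrict_add,
        MeasureTheory.integral_add_measure (MeasureTheory.Integrable.add_measure (hint p) (hint q₁)) (hint p₂),
        MeasureTheory.integral_add_measure (hint p) (hint q₁)]
    have e2 : ∫ θ in Set.Icc a b, ψ θ ∂(q + p₁ + q₂)
        = (∫ θ in Set.Icc a b, ψ θ ∂q) + (∫ θ in Set.Icc a b, ψ θ ∂p₁)
          + (∫ θ in Set.Icc a b, ψ θ ∂q₂) := by
      rw [Measure.restrict_add, Measure.restrict_add,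
        MeasureTheory.integral_add_measure (MeasureTheory.Integrable.add_measure (hint q) (hint p₁)) (hint q₂),
        MeasureTheory.integral_add_measure (hint q) (hint p₁)]
    rw [← e1, ← e2, hmeas]
  simp only [sInt]
  linear_combination key
lemma disj_icc_ioc {a b c : ℝ} : Disjoint (Set.Icc a b) (Set.Ioc b c) := by
  rw [Set.disjoint_left]
  rintro x ⟨_, hxb⟩ ⟨hbx, _⟩
  exact absurd hxb (not_le.2 hbx)

lemma decomp (m : Measure ℝ) [IsFiniteMeasure m] {ψ : ℝ → ℂ} (hψ : Continuous ψ)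
    {a : ℝ} {u : ℕ → ℝ} (hu : Monotone u) (h0 : u 0 = a) (k : ℕ) :
    ∫ θ in Set.Icc a (u k), ψ θ ∂m
      = (∫ θ in ({a} : Set ℝ), ψ θ ∂m)
        + ∑ i ∈ Finset.range k, ∫ θ in Set.Ioc (u i) (u (i+1)), ψ θ ∂m := by
  induction k with
  | zero => simp [h0, Set.Icc_self]
  | succ k ih =>
    have hak : a ≤ u k := h0 ▸ hu (Nat.zero_le k)
    have hkk : u k ≤ u (k+1) := hu (Nat.le_succ k)
    rw [← Set.Icc_union_Ioc_eq_Icc hak hkk,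
      MeasureTheory.setIntegral_union disj_icc_ioc measurableSet_Ioc
        (int_on m hψ) ((int_on m hψ (a := u k) (b := u (k+1))).mono_set Set.Ioc_subset_Icc_self),
      ih, Finset.sum_range_succ, add_assoc]

lemma decomp_meas (m : Measure ℝ) [IsFiniteMeasure m]
    {a : ℝ} {u : ℕ → ℝ} (hu : Monotone u) (h0 : u 0 = a) (k : ℕ) :
    m (Set.Icc a (u k))
      = m ({a} : Set ℝ) + ∑ i ∈ Finset.range k, m (Set.Ioc (u i) (u (i+1))) := by
  induction k with
  | zero => simp [h0, Set.Icc_self]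
  | succ k ih =>
    have hak : a ≤ u k := h0 ▸ hu (Nat.zero_le k)
    have hkk : u k ≤ u (k+1) := hu (Nat.le_succ k)
    rw [← Set.Icc_union_Ioc_eq_Icc hak hkk,
      measure_union disj_icc_ioc measurableSet_Ioc, ih, Finset.sum_range_succ, add_assoc]

lemma atom_int (m : Measure ℝ) {ψ : ℝ → ℂ} (a : ℝ) :
    ∫ θ in ({a} : Set ℝ), ψ θ ∂m = (m {a}).toReal • ψ a := by
  rw [Measure.restrict_singleton, MeasureTheory.integral_smul_measure,
    MeasureTheory.integral_dirac]
lemma sInt_bound (ν : SignedMeasure ℝ) {ψ : ℝ → ℂ} (hψ : Continuous ψ) {B V : ℝ}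
    (hB : ∀ θ ∈ Set.Icc (-1:ℝ) 0, ‖ψ θ‖ ≤ B) (hν0 : ν {(-1:ℝ)} = 0)
    {f : ℝ → ℝ} (hf : ∀ t ∈ Set.Icc (-1:ℝ) 0, f t = ν (Set.Icc (-1) t))
    (hV0 : 0 ≤ V) (hVar : eVariationOn f (Set.Icc (-1) 0) ≤ ENNReal.ofReal V) :
    ‖sInt (-1) 0 ν ψ‖ ≤ B * V := by
  classical
  set p := ν.toJordanDecomposition.posPart with hp
  set q := ν.toJordanDecomposition.negPart with hq
  have hB0 : 0 ≤ B := le_trans (norm_nonneg (ψ (-1))) (hB (-1) ⟨le_refl _, by norm_num⟩)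
  set T : ℝ := (p (Set.Icc (-1) 0)).toReal + (q (Set.Icc (-1) 0)).toReal with hTdef
  have hT0 : 0 ≤ T := add_nonneg ENNReal.toReal_nonneg ENNReal.toReal_nonneg
  have main : ∀ ε : ℝ, 0 < ε → ‖sInt (-1) 0 ν ψ‖ ≤ B * V + ε * T := by
    intro ε hε
    obtain ⟨δ, hδ0, hδ⟩ := Metric.uniformContinuousOn_iff_le.1
      ((isCompact_Icc : IsCompact (Set.Icc (-1:ℝ) 0)).uniformContinuousOn_of_continuous
        hψ.continuousOn) ε hε
    obtain ⟨k', hk'⟩ := exists_nat_one_div_lt hδ0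
    set k := k' + 1 with hkdef
    have hk0 : (0:ℝ) < (k:ℝ) := by positivity
    set t : ℕ → ℝ := fun i => -1 + ((min i k : ℕ) : ℝ) / (k:ℝ) with htdef
    have htmono : Monotone t := by
      intro i j hij
      have hmm : ((min i k : ℕ):ℝ) ≤ ((min j k : ℕ):ℝ) := by
        exact_mod_cast min_le_min hij le_rfl
      dsimp only [t]
      gcongr
    have htmem : ∀ i, t i ∈ Set.Icc (-1:ℝ) 0 := by
      intro i
      have h1 : (0:ℝ) ≤ ((min i k : ℕ):ℝ) := Nat.cast_nonneg _
      have h2 : ((min i k : ℕ):ℝ) ≤ (k:ℝ) := by exact_mod_cast min_le_right i k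
      have h3 : ((min i k : ℕ):ℝ) / k ≤ 1 := (div_le_one hk0).2 h2
      have h4 : (0:ℝ) ≤ ((min i k : ℕ):ℝ) / k := div_nonneg h1 hk0.le
      exact ⟨by dsimp only [t]; linarith, by dsimp only [t]; linarith⟩
    have ht0 : t 0 = -1 := by simp [t]
    have htk : t k = 0 := by
      dsimp only [t]; rw [min_self]; field_simp; norm_num
    have htlt : ∀ i, i < k → t (i+1) - t i = 1 / (k:ℝ) := by
      intro i hik
      dsimp only [t]
      rw [min_eq_left hik.le, min_eq_left (Nat.succ_le_of_lt hik)]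
      push_cast
      field_simp
      ring
    have hioc : ∀ i, i < k → (p (Set.Ioc (t i) (t (i+1)))).toReal
        - (q (Set.Ioc (t i) (t (i+1)))).toReal = f (t (i+1)) - f (t i) := by
      intro i hik
      have hti := htmem i; have hti1 := htmem (i+1)
      have hmono' : t i ≤ t (i+1) := htmono (Nat.le_succ i)
      have hsplit : ν (Set.Icc (-1) (t (i+1)))
          = ν (Set.Icc (-1) (t i)) + ν (Set.Ioc (t i) (t (i+1))) := by
        rw [← Set.Icc_union_Ioc_eq_Icc hti.1 hmono']
        exact MeasureTheory.VectorMeasure.of_union disj_icc_ioc measurableSet_Icc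
          measurableSet_Ioc
      have hsm := sm_apply ν (measurableSet_Ioc (a := t i) (b := t (i+1)))
      rw [← hp, ← hq] at hsm
      rw [← hsm, hf _ hti1, hf _ hti, hsplit]
      ring
    have hatom : (p {(-1:ℝ)}).toReal - (q {(-1:ℝ)}).toReal = 0 := by
      have hsm := sm_apply ν (measurableSet_singleton (-1:ℝ))
      rw [← hp, ← hq] at hsm
      rw [hν0] at hsm; linarith
    set S : ℂ := ∑ i ∈ Finset.range k,
      ψ (t (i+1)) * (((f (t (i+1)) : ℝ) : ℂ) - ((f (t i) : ℝ) : ℂ)) with hSdef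
    have hdp := decomp p hψ htmono ht0 k
    have hdq := decomp q hψ htmono ht0 k
    rw [htk] at hdp hdq
    have e1 : sInt (-1) 0 ν ψ
        = ∑ i ∈ Finset.range k, ((∫ θ in Set.Ioc (t i) (t (i+1)), ψ θ ∂p)
            - (∫ θ in Set.Ioc (t i) (t (i+1)), ψ θ ∂q)) := by
      simp only [sInt]
      rw [← hp, ← hq, hdp, hdq, atom_int, atom_int, Finset.sum_sub_distrib]
      simp only [Complex.real_smul]
      have hatomC : ((p {(-1:ℝ)}).toReal : ℂ) - ((q {(-1:ℝ)}).toReal : ℂ) = 0 := by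
        exact_mod_cast hatom
      linear_combination (ψ (-1)) * hatomC
    have hpiece : ∀ (m : Measure ℝ) [IsFiniteMeasure m], ∀ i, i < k →
        ‖(∫ θ in Set.Ioc (t i) (t (i+1)), ψ θ ∂m)
          - ψ (t (i+1)) * ((m (Set.Ioc (t i) (t (i+1)))).toReal : ℂ)‖
        ≤ ε * (m (Set.Ioc (t i) (t (i+1)))).toReal := by
      intro m _ i hik
      have hsub : Set.Ioc (t i) (t (i+1)) ⊆ Set.Icc (-1:ℝ) 0 := fun x hx =>
        ⟨le_trans (htmem i).1 hx.1.le, le_trans hx.2 (htmem (i+1)).2⟩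
      have hint2 : IntegrableOn ψ (Set.Ioc (t i) (t (i+1))) m :=
        (int_on m hψ (a := t i) (b := t (i+1))).mono_set Set.Ioc_subset_Icc_self
      have heq : (∫ θ in Set.Ioc (t i) (t (i+1)), ψ θ ∂m)
          - ψ (t (i+1)) * ((m (Set.Ioc (t i) (t (i+1)))).toReal : ℂ)
          = ∫ θ in Set.Ioc (t i) (t (i+1)), (ψ θ - ψ (t (i+1))) ∂m := by
        rw [MeasureTheory.integral_sub hint2
          (MeasureTheory.integrableOn_const (measure_lt_top m _).ne),
          MeasureTheory.setIntegral_const, Complex.real_smul, Measure.real]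
        ring
      rw [heq]
      refine MeasureTheory.norm_setIntegral_le_of_norm_le_const (measure_lt_top m _) ?_
      · intro x hx
        rw [← dist_eq_norm]
        refine hδ x (hsub hx) (t (i+1)) (htmem (i+1)) ?_
        rw [Real.dist_eq, abs_of_nonpos (by linarith [hx.2] : x - t (i+1) ≤ 0)]
        have h5 := htlt i hik
        have h6 : (1:ℝ)/k < δ := by
          rw [hkdef]; push_cast; exact hk'
        have h7 := hx.1
        have h8 := hx.2
        clear_value t k
        linarith
    have hsum_meas : ∀ (m : Measure ℝ) [IsFiniteMeasure m],
        ∑ i ∈ Finset.range k, (m (Set.Ioc (t i) (t (i+1)))).toReal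
          ≤ (m (Set.Icc (-1:ℝ) 0)).toReal := by
      intro m _
      have hdm := decomp_meas m htmono ht0 k
      rw [htk] at hdm
      have hfin : ∀ i ∈ Finset.range k, m (Set.Ioc (t i) (t (i+1))) ≠ ⊤ :=
        fun i _ => (measure_lt_top m _).ne
      rw [← ENNReal.toReal_sum hfin]
      refine (ENNReal.toReal_le_toReal ?_ (measure_lt_top m _).ne).2 ?_
      · exact ne_top_of_le_ne_top (measure_lt_top m _).ne (by rw [hdm]; exact le_add_self)
      · rw [hdm]; exact le_add_self
    have hdiff : sInt (-1) 0 ν ψ - S = ∑ i ∈ Finset.range k,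
        (((∫ θ in Set.Ioc (t i) (t (i+1)), ψ θ ∂p)
            - ψ (t (i+1)) * ((p (Set.Ioc (t i) (t (i+1)))).toReal : ℂ))
          - ((∫ θ in Set.Ioc (t i) (t (i+1)), ψ θ ∂q)
            - ψ (t (i+1)) * ((q (Set.Ioc (t i) (t (i+1)))).toReal : ℂ))) := by
      rw [e1, hSdef, ← Finset.sum_sub_distrib]
      refine Finset.sum_congr rfl ?_
      intro i hi
      rw [Finset.mem_range] at hi
      have hC : ((f (t (i+1)) : ℝ) : ℂ) - ((f (t i) : ℝ) : ℂ)
          = ((p (Set.Ioc (t i) (t (i+1)))).toReal : ℂ)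
            - ((q (Set.Ioc (t i) (t (i+1)))).toReal : ℂ) := by
        exact_mod_cast congrArg (fun x : ℝ => (x : ℂ)) (hioc i hi).symm
      rw [hC]; ring
    have hnorm1 : ‖sInt (-1) 0 ν ψ - S‖ ≤ ε * T := by
      rw [hdiff]
      have step1 := norm_sum_le (Finset.range k) (fun i =>
        (((∫ θ in Set.Ioc (t i) (t (i+1)), ψ θ ∂p)
            - ψ (t (i+1)) * ((p (Set.Ioc (t i) (t (i+1)))).toReal : ℂ))
          - ((∫ θ in Set.Ioc (t i) (t (i+1)), ψ θ ∂q)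
            - ψ (t (i+1)) * ((q (Set.Ioc (t i) (t (i+1)))).toReal : ℂ))))
      refine le_trans step1 ?_
      have step2 : ∀ i ∈ Finset.range k,
          ‖(((∫ θ in Set.Ioc (t i) (t (i+1)), ψ θ ∂p)
            - ψ (t (i+1)) * ((p (Set.Ioc (t i) (t (i+1)))).toReal : ℂ))
          - ((∫ θ in Set.Ioc (t i) (t (i+1)), ψ θ ∂q)
            - ψ (t (i+1)) * ((q (Set.Ioc (t i) (t (i+1)))).toReal : ℂ)))‖
          ≤ ε * (p (Set.Ioc (t i) (t (i+1)))).toReal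
            + ε * (q (Set.Ioc (t i) (t (i+1)))).toReal := by
        intro i hi
        rw [Finset.mem_range] at hi
        exact le_trans (norm_sub_le _ _) (add_le_add (hpiece p i hi) (hpiece q i hi))
      refine le_trans (Finset.sum_le_sum step2) ?_
      rw [Finset.sum_add_distrib, ← Finset.mul_sum, ← Finset.mul_sum]
      have := add_le_add (mul_le_mul_of_nonneg_left (hsum_meas p) hε.le)
        (mul_le_mul_of_nonneg_left (hsum_meas q) hε.le)
      refine le_trans this ?_
      rw [hTdef]; ring_nf; exact le_refl _
    have hSum : ∑ i ∈ Finset.range k, |f (t (i+1)) - f (t i)| ≤ V := by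
      have h3 := eVariationOn.sum_le (f := f) (n := k) htmono htmem
      have h4 : ∑ i ∈ Finset.range k, edist (f (t (i+1))) (f (t i))
          = ENNReal.ofReal (∑ i ∈ Finset.range k, |f (t (i+1)) - f (t i)|) := by
        rw [ENNReal.ofReal_sum_of_nonneg (fun i _ => abs_nonneg _)]
        exact Finset.sum_congr rfl fun i _ => by rw [edist_dist, Real.dist_eq]
      rw [h4] at h3
      exact (ENNReal.ofReal_le_ofReal_iff hV0).1 (le_trans h3 hVar)
    have hSb : ‖S‖ ≤ B * V := by
      refine le_trans (norm_sum_le _ _) ?_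
      have step : ∀ i ∈ Finset.range k,
          ‖ψ (t (i+1)) * (((f (t (i+1)) : ℝ) : ℂ) - ((f (t i) : ℝ) : ℂ))‖
            ≤ B * |f (t (i+1)) - f (t i)| := by
        intro i _
        rw [norm_mul]
        have hh : ‖(((f (t (i+1)) : ℝ) : ℂ) - ((f (t i) : ℝ) : ℂ))‖
            = |f (t (i+1)) - f (t i)| := by
          rw [← Complex.ofReal_sub, Complex.norm_real, Real.norm_eq_abs]
        rw [hh]
        exact mul_le_mul_of_nonneg_right (hB _ (htmem (i+1))) (abs_nonneg _)
      refine le_trans (Finset.sum_le_sum step) ?_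
      rw [← Finset.mul_sum]
      exact mul_le_mul_of_nonneg_left hSum hB0
    calc ‖sInt (-1) 0 ν ψ‖ = ‖S + (sInt (-1) 0 ν ψ - S)‖ := by congr 1; ring
      _ ≤ ‖S‖ + ‖sInt (-1) 0 ν ψ - S‖ := norm_add_le _ _
      _ ≤ B * V + ε * T := add_le_add hSb hnorm1
  refine le_of_forall_pos_le_add ?_
  intro ε hε
  have h := main (ε / (T+1)) (by positivity)
  have hle : ε / (T+1) * T ≤ ε := by
    rw [div_mul_eq_mul_div, div_le_iff₀ (by linarith)]
    nlinarith
  linarith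
lemma prod_sub_bound {n : ℕ} (a b : Fin n → ℂ) {R δ : ℝ} (hR : 1 ≤ R) (hδ : 0 ≤ δ)
    (ha : ∀ i, ‖a i‖ ≤ R) (hb : ∀ i, ‖b i‖ ≤ R) (hab : ∀ i, ‖a i - b i‖ ≤ δ)
    (s : Finset (Fin n)) :
    ‖∏ i ∈ s, a i - ∏ i ∈ s, b i‖ ≤ (s.card : ℝ) * R ^ s.card * δ := by
  classical
  have hR0 : (0:ℝ) ≤ R := le_trans zero_le_one hR
  induction s using Finset.induction_on with
  | empty => simp
  | @insert x s hx ih =>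
    rw [Finset.prod_insert hx, Finset.prod_insert hx, Finset.card_insert_of_notMem hx]
    have hprodb : ‖∏ i ∈ s, b i‖ ≤ R ^ s.card := by
      have heqn : ‖∏ i ∈ s, b i‖ = ∏ i ∈ s, ‖b i‖ := by
        simp [norm_prod, map_prod]
      refine le_trans (le_of_eq heqn) ?_
      calc ∏ i ∈ s, ‖b i‖ ≤ ∏ _i ∈ s, R :=
            Finset.prod_le_prod (fun i _ => norm_nonneg _) (fun i _ => hb i)
        _ = R ^ s.card := Finset.prod_const R
    have hpow : R ^ s.card ≤ R ^ (s.card + 1) := pow_le_pow_right₀ hR (Nat.le_succ _)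
    calc ‖a x * ∏ i ∈ s, a i - b x * ∏ i ∈ s, b i‖
        = ‖a x * (∏ i ∈ s, a i - ∏ i ∈ s, b i) + (a x - b x) * ∏ i ∈ s, b i‖ := by
          congr 1; ring
      _ ≤ ‖a x * (∏ i ∈ s, a i - ∏ i ∈ s, b i)‖ + ‖(a x - b x) * ∏ i ∈ s, b i‖ :=
          norm_add_le _ _
      _ = ‖a x‖ * ‖∏ i ∈ s, a i - ∏ i ∈ s, b i‖ + ‖a x - b x‖ * ‖∏ i ∈ s, b i‖ := by
          rw [norm_mul, norm_mul]
      _ ≤ R * ((s.card : ℝ) * R ^ s.card * δ) + δ * R ^ s.card := by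
          refine add_le_add (mul_le_mul (ha x) ih (norm_nonneg _) hR0)
            (mul_le_mul (hab x) hprodb (norm_nonneg _) hδ)
      _ ≤ ((s.card : ℝ) + 1) * R ^ (s.card + 1) * δ := by
          have h1 : R * ((s.card : ℝ) * R ^ s.card * δ) = (s.card : ℝ) * R ^ (s.card+1) * δ := by
            rw [pow_succ]; ring
          have h2 : δ * R ^ s.card ≤ δ * R ^ (s.card + 1) :=
            mul_le_mul_of_nonneg_left hpow hδ
          have h3 : (0:ℝ) ≤ R ^ (s.card + 1) := pow_nonneg hR0 _
          rw [h1]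
          nlinarith
      _ = ((s.card + 1 : ℕ) : ℝ) * R ^ (s.card + 1) * δ := by push_cast; ring

lemma det_sub_bound {d : ℕ} (A B : Matrix (Fin d) (Fin d) ℂ) {R δ : ℝ} (hR : 1 ≤ R)
    (hδ : 0 ≤ δ) (hA : ∀ i j, ‖A i j‖ ≤ R) (hB : ∀ i j, ‖B i j‖ ≤ R)
    (hAB : ∀ i j, ‖A i j - B i j‖ ≤ δ) :
    ‖A.det - B.det‖ ≤ (Nat.factorial d : ℝ) * ((d:ℝ) * R ^ d * δ) := by
  classical
  rw [Matrix.det_apply', Matrix.det_apply', ← Finset.sum_sub_distrib]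
  refine le_trans (norm_sum_le _ _) ?_
  have step : ∀ σ : Equiv.Perm (Fin d),
      ‖((Equiv.Perm.sign σ : ℤ) : ℂ) * ∏ i, A (σ i) i
        - ((Equiv.Perm.sign σ : ℤ) : ℂ) * ∏ i, B (σ i) i‖
        ≤ (d:ℝ) * R ^ d * δ := by
    intro σ
    rw [← mul_sub, norm_mul]
    have hsign : ‖((Equiv.Perm.sign σ : ℤ) : ℂ)‖ = 1 := by
      rcases Int.units_eq_one_or (Equiv.Perm.sign σ) with h | h <;> simp [h]
    rw [hsign, one_mul]
    have hb := prod_sub_bound (fun i => A (σ i) i) (fun i => B (σ i) i) hR hδ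
      (fun i => hA _ _) (fun i => hB _ _) (fun i => hAB _ _) Finset.univ
    simpa [Finset.card_univ] using hb
  refine le_trans (Finset.sum_le_sum (fun σ _ => step σ)) ?_
  rw [Finset.sum_const, Finset.card_univ, Fintype.card_perm, Fintype.card_fin]
  simp [nsmul_eq_mul]

lemma sInt_le (ν : SignedMeasure ℝ) {ψ : ℝ → ℂ} (hψ : Continuous ψ) {B : ℝ}
    (hB : ∀ θ ∈ Set.Icc (-1:ℝ) 0, ‖ψ θ‖ ≤ B) :
    ‖sInt (-1) 0 ν ψ‖ ≤ B * ((ν.toJordanDecomposition.posPart (Set.Icc (-1) 0)).toReal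
      + (ν.toJordanDecomposition.negPart (Set.Icc (-1) 0)).toReal) := by
  have h1 := MeasureTheory.norm_setIntegral_le_of_norm_le_const
    (μ := ν.toJordanDecomposition.posPart) (s := Set.Icc (-1:ℝ) 0) (f := ψ)
    (measure_lt_top _ _) (fun x hx => hB x hx)
  have h2 := MeasureTheory.norm_setIntegral_le_of_norm_le_const
    (μ := ν.toJordanDecomposition.negPart) (s := Set.Icc (-1:ℝ) 0) (f := ψ)
    (measure_lt_top _ _) (fun x hx => hB x hx)
  refine le_trans (norm_sub_le _ _) ?_
  calc ‖∫ θ in Set.Icc (-1:ℝ) 0, ψ θ ∂ν.toJordanDecomposition.posPart‖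
        + ‖∫ θ in Set.Icc (-1:ℝ) 0, ψ θ ∂ν.toJordanDecomposition.negPart‖
      ≤ B * (ν.toJordanDecomposition.posPart (Set.Icc (-1) 0)).toReal
        + B * (ν.toJordanDecomposition.negPart (Set.Icc (-1) 0)).toReal := add_le_add h1 h2
    _ = B * ((ν.toJordanDecomposition.posPart (Set.Icc (-1) 0)).toReal
        + (ν.toJordanDecomposition.negPart (Set.Icc (-1) 0)).toReal) := by ring

lemma int_diff (m : Measure ℝ) [IsFiniteMeasure m] :
    Differentiable ℂ (fun s : ℂ => ∫ θ in Set.Icc (-1:ℝ) 0, Complex.exp (s * θ) ∂m) := by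
  intro x₀
  have hcont : ∀ x : ℂ, Continuous (fun θ : ℝ => Complex.exp (x * θ)) := fun x =>
    (continuous_const.mul Complex.continuous_ofReal).cexp
  have hcont' : ∀ x : ℂ, Continuous (fun θ : ℝ => Complex.exp (x * θ) * θ) := fun x =>
    (hcont x).mul Complex.continuous_ofReal
  have hbound : ∀ᵐ (θ : ℝ) ∂(m.restrict (Set.Icc (-1:ℝ) 0)), ∀ x ∈ Metric.ball x₀ 1,
      ‖Complex.exp (x * θ) * θ‖ ≤ Real.exp (‖x₀‖ + 1) := by
    filter_upwards [MeasureTheory.ae_restrict_mem measurableSet_Icc] with θ hθ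
    intro x hx
    have hθ1 : |θ| ≤ 1 := by
      rw [abs_le]; exact ⟨hθ.1, le_trans hθ.2 zero_le_one⟩
    have hxb : ‖x‖ ≤ ‖x₀‖ + 1 := by
      have := mem_ball_iff_norm.1 hx
      calc ‖x‖ = ‖x₀ + (x - x₀)‖ := by ring_nf
        _ ≤ ‖x₀‖ + ‖x - x₀‖ := norm_add_le _ _
        _ ≤ ‖x₀‖ + 1 := by linarith
    rw [norm_mul]
    have hre : (x * (θ:ℂ)).re = x.re * θ := by
      simp [Complex.mul_re]
    have h1 : ‖Complex.exp (x * θ)‖ ≤ Real.exp (‖x₀‖ + 1) := by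
      rw [Complex.norm_exp, hre]
      refine Real.exp_le_exp.2 ?_
      calc x.re * θ ≤ |x.re * θ| := le_abs_self _
        _ = |x.re| * |θ| := abs_mul _ _
        _ ≤ (‖x₀‖ + 1) * 1 :=
            mul_le_mul (le_trans (Complex.abs_re_le_norm x) hxb) hθ1 (abs_nonneg _)
              (by positivity)
        _ = ‖x₀‖ + 1 := mul_one _
    have h2 : ‖((θ:ℝ):ℂ)‖ ≤ 1 := by
      rw [Complex.norm_real, Real.norm_eq_abs]; exact hθ1
    calc ‖Complex.exp (x * θ)‖ * ‖((θ:ℝ):ℂ)‖ ≤ Real.exp (‖x₀‖ + 1) * 1 :=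
          mul_le_mul h1 h2 (norm_nonneg _) (Real.exp_nonneg _)
      _ = Real.exp (‖x₀‖ + 1) := mul_one _
  have key := hasDerivAt_integral_of_dominated_loc_of_deriv_le
    (μ := m.restrict (Set.Icc (-1:ℝ) 0))
    (F := fun (s : ℂ) (θ : ℝ) => Complex.exp (s * θ))
    (F' := fun (s : ℂ) (θ : ℝ) => Complex.exp (s * θ) * θ) (x₀ := x₀)
    (bound := fun _ => Real.exp (‖x₀‖ + 1)) (Metric.ball_mem_nhds x₀ one_pos)
    (Filter.Eventually.of_forall fun x => (hcont x).aestronglyMeasurable.restrict)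
    (int_on m (hcont x₀))
    ((hcont' x₀).aestronglyMeasurable.restrict)
    hbound (MeasureTheory.integrable_const _)
    (Filter.Eventually.of_forall fun θ => fun x _ =>
      ((hasDerivAt_mul_const ((θ:ℝ):ℂ)).cexp (x := x)))
  exact key.2.differentiableAt

lemma charFn_diff {d : ℕ} (μ : Fin d → Fin d → SignedMeasure ℝ) :
    Differentiable ℂ (charFn μ) := by
  classical
  have hent : ∀ i j, Differentiable ℂ
      (fun s : ℂ => sInt (-1) 0 (μ i j) (fun θ => Complex.exp (s * θ))) := by
    intro i j
    simp only [sInt]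
    exact (int_diff _).sub (int_diff _)
  have hrw : charFn μ = fun s : ℂ => ∑ σ : Equiv.Perm (Fin d),
      ((Equiv.Perm.sign σ : ℤ) : ℂ) * ∏ i,
        ((1 : Matrix (Fin d) (Fin d) ℂ) (σ i) i
          - sInt (-1) 0 (μ (σ i) i) (fun θ => Complex.exp (s * θ))) := by
    funext s
    rw [charFn, Matrix.det_apply']
    rfl
  rw [hrw]
  refine Differentiable.fun_sum fun σ _ => ?_
  refine Differentiable.const_mul ?_ _
  exact Differentiable.fun_finsetProd fun i _ => (differentiable_const _).sub (hent _ _)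

lemma charFn_cont {d : ℕ} (μ : Fin d → Fin d → SignedMeasure ℝ) :
    Continuous (charFn μ) := (charFn_diff μ).continuous
noncomputable def Bc (α : ℝ) : ℝ := max 1 (Real.exp (-α))

noncomputable def Tc {d : ℕ} (μ : Fin d → Fin d → SignedMeasure ℝ) : ℝ :=
  ∑ i, ∑ j, (((μ i j).toJordanDecomposition.posPart (Set.Icc (-1) 0)).toReal
    + ((μ i j).toJordanDecomposition.negPart (Set.Icc (-1) 0)).toReal)

noncomputable def Rc {d : ℕ} (α : ℝ) (μ : Fin d → Fin d → SignedMeasure ℝ) : ℝ :=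
  2 + Bc α * (Tc μ + 1)

noncomputable def Cc {d : ℕ} (α : ℝ) (μ : Fin d → Fin d → SignedMeasure ℝ) : ℝ :=
  (Nat.factorial d : ℝ) * ((d:ℝ) * (Rc α μ) ^ d * Bc α)

lemma Bc_one (α : ℝ) : 1 ≤ Bc α := le_max_left _ _

lemma Bc_pos (α : ℝ) : 0 < Bc α := lt_of_lt_of_le one_pos (Bc_one α)

lemma Tc_nonneg {d : ℕ} (μ : Fin d → Fin d → SignedMeasure ℝ) : 0 ≤ Tc μ := by
  refine Finset.sum_nonneg fun i _ => Finset.sum_nonneg fun j _ =>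
    add_nonneg ENNReal.toReal_nonneg ENNReal.toReal_nonneg

lemma Rc_one {d : ℕ} (α : ℝ) (μ : Fin d → Fin d → SignedMeasure ℝ) : 1 ≤ Rc α μ := by
  have h1 := Bc_one α
  have h2 := Tc_nonneg μ
  have : 0 ≤ Bc α * (Tc μ + 1) := mul_nonneg (by linarith) (by linarith)
  simp only [Rc]; linarith

lemma Cc_nonneg {d : ℕ} (α : ℝ) (μ : Fin d → Fin d → SignedMeasure ℝ) : 0 ≤ Cc α μ := by
  have h1 := Bc_pos α
  have h2 : (0:ℝ) ≤ (Rc α μ) ^ d := pow_nonneg (by linarith [Rc_one α μ]) d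
  simp only [Cc]; positivity

lemma exp_bound {α : ℝ} {s : ℂ} (hs : α ≤ s.re) :
    ∀ θ ∈ Set.Icc (-1:ℝ) 0, ‖Complex.exp (s * θ)‖ ≤ Bc α := by
  intro θ hθ
  rw [Complex.norm_exp]
  have hre : (s * (θ:ℂ)).re = s.re * θ := by simp [Complex.mul_re]
  rw [hre]
  rcases le_or_gt 0 s.re with h | h
  · refine le_trans ?_ (le_max_left 1 (Real.exp (-α)))
    rw [← Real.exp_zero]
    exact Real.exp_le_exp.2 (mul_nonpos_of_nonneg_of_nonpos h hθ.2)
  · refine le_trans ?_ (le_max_right 1 (Real.exp (-α)))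
    refine Real.exp_le_exp.2 ?_
    nlinarith [hθ.1, hθ.2]

lemma entry_lip {d : ℕ} (i j : Fin d) :
    LipschitzWith 1 (fun A : Matrix (Fin d) (Fin d) ℝ => A i j) := by
  refine LipschitzWith.of_dist_le_mul fun A B => ?_
  simp only [NNReal.coe_one, one_mul, dist_eq_norm]
  have h := Matrix.norm_entry_le_entrywise_sup_norm (A - B) (i := i) (j := j)
  simpa [Matrix.sub_apply] using h

lemma charFn_sub_bound {d : ℕ} {M N : ℝ → Matrix (Fin d) (Fin d) ℝ}
    {μ ν : Fin d → Fin d → SignedMeasure ℝ}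
    (hMl : IsLinked M μ (-1) 0) (hM0 : M (-1) = 0)
    (hNl : IsLinked N ν (-1) 0) (hN0 : N (-1) = 0)
    {α v : ℝ} (hv0 : 0 ≤ v) (hv1 : v ≤ 1)
    (hvar : eVariationOn (fun t => M t - N t) (Set.Icc (-1) 0) ≤ ENNReal.ofReal v)
    {s : ℂ} (hs : α ≤ s.re) :
    ‖charFn μ s - charFn ν s‖ ≤ Cc α μ * v := by
  classical
  set ψ : ℝ → ℂ := fun θ => Complex.exp (s * θ) with hψdef
  have hψc : Continuous ψ := (continuous_const.mul Complex.continuous_ofReal).cexp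
  have hψB : ∀ θ ∈ Set.Icc (-1:ℝ) 0, ‖ψ θ‖ ≤ Bc α := exp_bound hs
  -- entry difference bound
  have hdiff : ∀ i j, ‖sInt (-1) 0 (μ i j) ψ - sInt (-1) 0 (ν i j) ψ‖ ≤ Bc α * v := by
    intro i j
    rw [← sInt_sub _ _ _ _ _ hψc]
    have hm1 : (-1:ℝ) ∈ Set.Icc (-1:ℝ) 0 := ⟨le_refl _, by norm_num⟩
    have hν0 : (μ i j - ν i j) {(-1:ℝ)} = 0 := by
      rw [MeasureTheory.VectorMeasure.sub_apply]
      have h1 : μ i j {(-1:ℝ)} = M (-1) i j := by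
        rw [hMl (-1) hm1 i j, Set.Icc_self]
      have h2 : ν i j {(-1:ℝ)} = N (-1) i j := by
        rw [hNl (-1) hm1 i j, Set.Icc_self]
      rw [h1, h2, hM0, hN0]
      simp
    have hf : ∀ t ∈ Set.Icc (-1:ℝ) 0,
        (fun t => (M t - N t) i j) t = (μ i j - ν i j) (Set.Icc (-1) t) := by
      intro t ht
      show (M t - N t) i j = _
      rw [MeasureTheory.VectorMeasure.sub_apply, Matrix.sub_apply,
        hMl t ht i j, hNl t ht i j]
    have hvent : eVariationOn (fun t => (M t - N t) i j) (Set.Icc (-1) 0)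
        ≤ ENNReal.ofReal v := by
      have hcomp : ((fun A : Matrix (Fin d) (Fin d) ℝ => A i j)
          ∘ fun t => M t - N t) = fun t => (M t - N t) i j := rfl
      have h := ((entry_lip i j).lipschitzOnWith (s := Set.univ)).comp_eVariationOn_le
        (Set.mapsTo_univ (fun t => M t - N t) (Set.Icc (-1:ℝ) 0))
      rw [hcomp] at h
      refine le_trans h ?_
      rw [ENNReal.coe_one, one_mul]
      exact hvar
    exact sInt_bound (μ i j - ν i j) hψc hψB hν0 hf hv0 hvent
  -- entry bounds
  have hA0 : ∀ i j, ‖(1 - mInt (-1) 0 μ ψ) i j‖ ≤ 1 + Bc α * Tc μ := by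
    intro i j
    rw [Matrix.sub_apply]
    refine le_trans (norm_sub_le _ _) ?_
    have h1 : ‖(1 : Matrix (Fin d) (Fin d) ℂ) i j‖ ≤ 1 := by
      rw [Matrix.one_apply]
      split <;> simp
    have h2 : ‖(mInt (-1) 0 μ ψ) i j‖ ≤ Bc α * Tc μ := by
      have hle := sInt_le (μ i j) hψc hψB
      refine le_trans hle ?_
      refine mul_le_mul_of_nonneg_left ?_ (Bc_pos α).le
      have : (((μ i j).toJordanDecomposition.posPart (Set.Icc (-1) 0)).toReal
          + ((μ i j).toJordanDecomposition.negPart (Set.Icc (-1) 0)).toReal) ≤ Tc μ := by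
        refine le_trans (Finset.single_le_sum (f := fun j' =>
          (((μ i j').toJordanDecomposition.posPart (Set.Icc (-1) 0)).toReal
            + ((μ i j').toJordanDecomposition.negPart (Set.Icc (-1) 0)).toReal))
          (fun j' _ => add_nonneg ENNReal.toReal_nonneg ENNReal.toReal_nonneg)
          (Finset.mem_univ j)) ?_
        exact Finset.single_le_sum (f := fun i' => ∑ j',
          (((μ i' j').toJordanDecomposition.posPart (Set.Icc (-1) 0)).toReal
            + ((μ i' j').toJordanDecomposition.negPart (Set.Icc (-1) 0)).toReal))
          (fun i' _ => Finset.sum_nonneg fun j' _ =>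
            add_nonneg ENNReal.toReal_nonneg ENNReal.toReal_nonneg) (Finset.mem_univ i)
      exact this
    exact add_le_add h1 h2
  have hRineq : 1 + Bc α * Tc μ + Bc α ≤ Rc α μ := by
    simp only [Rc]; nlinarith [(Bc_pos α).le, Tc_nonneg μ, Bc_one α]
  have hA : ∀ i j, ‖(1 - mInt (-1) 0 μ ψ) i j‖ ≤ Rc α μ := fun i j =>
    le_trans (hA0 i j) (by nlinarith [(Bc_pos α).le, Tc_nonneg μ, Bc_one α, hRineq])
  have hABd : ∀ i j, ‖(1 - mInt (-1) 0 μ ψ) i j - (1 - mInt (-1) 0 ν ψ) i j‖ ≤ Bc α * v := by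
    intro i j
    have : (1 - mInt (-1) 0 μ ψ) i j - (1 - mInt (-1) 0 ν ψ) i j
        = -(sInt (-1) 0 (μ i j) ψ - sInt (-1) 0 (ν i j) ψ) := by
      simp only [Matrix.sub_apply]
      show (1 : Matrix (Fin d) (Fin d) ℂ) i j - sInt (-1) 0 (μ i j) ψ
        - ((1 : Matrix (Fin d) (Fin d) ℂ) i j - sInt (-1) 0 (ν i j) ψ) = _
      ring
    rw [this, norm_neg]
    exact hdiff i j
  have hBent : ∀ i j, ‖(1 - mInt (-1) 0 ν ψ) i j‖ ≤ Rc α μ := by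
    intro i j
    have h := norm_sub_le ((1 - mInt (-1) 0 μ ψ) i j)
      ((1 - mInt (-1) 0 μ ψ) i j - (1 - mInt (-1) 0 ν ψ) i j)
    have heq : (1 - mInt (-1) 0 μ ψ) i j
        - ((1 - mInt (-1) 0 μ ψ) i j - (1 - mInt (-1) 0 ν ψ) i j)
        = (1 - mInt (-1) 0 ν ψ) i j := by ring
    rw [heq] at h
    refine le_trans h ?_
    have h2 : Bc α * v ≤ Bc α := by
      nlinarith [(Bc_pos α).le]
    refine le_trans (add_le_add (hA0 i j) (le_trans (hABd i j) h2)) hRineq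
  have hdet := det_sub_bound (1 - mInt (-1) 0 μ ψ) (1 - mInt (-1) 0 ν ψ)
    (Rc_one α μ) (mul_nonneg (Bc_pos α).le hv0) hA hBent hABd
  have hcf : charFn μ s - charFn ν s
      = (1 - mInt (-1) 0 μ ψ).det - (1 - mInt (-1) 0 ν ψ).det := rfl
  rw [hcf]
  refine le_trans hdet (le_of_eq ?_)
  simp only [Cc]; ring
theorem stmt18 (d : ℕ) (M : ℝ → Matrix (Fin d) (Fin d) ℝ)
    (μM : Fin d → Fin d → SignedMeasure ℝ) (hM : MemL M μM)
    (hSM : {x : ℝ | ∃ s : ℂ, s.re = x ∧ charFn μM s = 0}.Nonempty)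
    (Nn : ℕ → ℝ → Matrix (Fin d) (Fin d) ℝ)
    (μn : ℕ → Fin d → Fin d → SignedMeasure ℝ)
    (hNn : ∀ n, MemL (Nn n) (μn n))
    (hvar : Filter.Tendsto
      (fun n => eVariationOn (fun t => M t - Nn n t) (Set.Icc (-1) 0))
      Filter.atTop (nhds 0)) :
    Filter.Tendsto (fun n => specAbs (μn n)) Filter.atTop (nhds (specAbs μM)) := by
  classical
  obtain ⟨hMnorm, hMlink, hMvar, hMbdd, hMlow⟩ := hM
  set SA := specAbs μM with hSAdef
  rw [Metric.tendsto_atTop]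
  intro ε hε0
  set ε' := min ε 1 with hε'def
  have hε'0 : 0 < ε' := lt_min hε0 one_pos
  have hε'1 : ε' ≤ 1 := min_le_right _ _
  have hε'ε : ε' ≤ ε := min_le_left _ _
  -- a zero of charFn μM with large real part
  obtain ⟨x₀, hx₀Z, hx₀gt⟩ := exists_lt_of_lt_csSup hSM
    (show SA - ε'/4 < sSup {x : ℝ | ∃ s : ℂ, s.re = x ∧ charFn μM s = 0} by
      rw [hSAdef]; simp only [specAbs]; linarith)
  obtain ⟨s₀, hs₀re, hs₀zero⟩ := hx₀Z
  -- charFn μM is not identically zero near s₀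
  have hana : ∀ z, AnalyticAt ℂ (charFn μM) z := fun z => (charFn_diff μM).analyticAt z
  obtain ⟨c₁, hc₁0, hc₁b⟩ := hMlow (SA + 1) (by rw [hSAdef]; linarith)
  have hnz : charFn μM ((SA + 1 : ℝ) : ℂ) ≠ 0 := by
    intro h0
    have := hc₁b ((SA + 1 : ℝ) : ℂ) (by rw [Complex.ofReal_re])
    rw [h0, norm_zero] at this
    linarith
  have hnotloc : ¬ (∀ᶠ z in nhds s₀, charFn μM z = 0) := by
    intro hloc
    have hEq : charFn μM =ᶠ[nhds s₀] 0 := hloc.mono fun z h => by simpa using h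
    have := (show AnalyticOnNhd ℂ (charFn μM) Set.univ from fun z _ => hana z
      ).eqOn_zero_of_preconnected_of_eventuallyEq_zero isPreconnected_univ
        (Set.mem_univ s₀) hEq
    exact hnz (this (Set.mem_univ _))
  have hiso : ∀ᶠ z in nhdsWithin s₀ {s₀}ᶜ, charFn μM z ≠ 0 := by
    rcases (hana s₀).eventually_eq_zero_or_eventually_ne_zero with h | h
    · exact absurd h hnotloc
    · exact h
  obtain ⟨r₁, hr₁0, hr₁⟩ := Metric.eventually_nhds_iff.1 (eventually_nhdsWithin_iff.1 hiso)
  set r := min (r₁/2) (ε'/8) with hrdef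
  have hr0 : 0 < r := lt_min (by linarith) (by linarith)
  have hrε : r ≤ ε'/8 := min_le_right _ _
  have hsphere_ne : ∀ z ∈ Metric.sphere s₀ r, charFn μM z ≠ 0 := by
    intro z hz
    have hdz : dist z s₀ = r := Metric.mem_sphere.1 hz
    refine hr₁ (by rw [hdz]; calc r ≤ r₁/2 := min_le_left _ _
      _ < r₁ := by linarith) ?_
    rw [Set.mem_compl_singleton_iff]
    intro hzeq
    rw [hzeq, dist_self] at hdz
    linarith
  -- minimum of ‖charFn μM‖ on the sphere
  obtain ⟨zm, hzm_mem, hzm_min⟩ := (isCompact_sphere s₀ r).exists_isMinOn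
    (NormedSpace.sphere_nonempty.2 hr0.le)
    ((charFn_cont μM).norm.continuousOn)
  set m := ‖charFn μM zm‖ with hmdef
  have hm0 : 0 < m := norm_pos_iff.2 (hsphere_ne zm hzm_mem)
  have hmle : ∀ z ∈ Metric.sphere s₀ r, m ≤ ‖charFn μM z‖ := fun z hz => hzm_min hz
  -- the constant for the upper bound
  obtain ⟨c, hc0, hcb⟩ := hMlow (SA + ε'/2) (by rw [hSAdef]; linarith)
  -- uniform Lipschitz constant
  set C := Cc (SA - 1) μM with hCdef
  have hC0 : 0 ≤ C := Cc_nonneg _ _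
  set η := min 1 (min (m / (3*(C+1))) (c / (2*(C+1)))) with hηdef
  have hη0 : 0 < η := by
    refine lt_min one_pos (lt_min (by positivity) (by positivity))
  have hη1 : η ≤ 1 := min_le_left _ _
  have hηm : η ≤ m / (3*(C+1)) := le_trans (min_le_right _ _) (min_le_left _ _)
  have hηc : η ≤ c / (2*(C+1)) := le_trans (min_le_right _ _) (min_le_right _ _)
  -- eventual smallness of the variation
  have hev : ∀ᶠ n in Filter.atTop,
      eVariationOn (fun t => M t - Nn n t) (Set.Icc (-1) 0) < ENNReal.ofReal η :=
    hvar.eventually_lt_const (ENNReal.ofReal_pos.2 hη0)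
  obtain ⟨Nb, hNb⟩ := Filter.eventually_atTop.1 hev
  refine ⟨Nb, fun n hn => ?_⟩
  have hVn := hNb n hn
  set Vn := eVariationOn (fun t => M t - Nn n t) (Set.Icc (-1) 0) with hVndef
  have hVtop : Vn ≠ ⊤ := ne_top_of_lt (lt_of_lt_of_le hVn le_top)
  set v := Vn.toReal with hvdef
  have hv0 : 0 ≤ v := ENNReal.toReal_nonneg
  have hvar' : Vn ≤ ENNReal.ofReal v := le_of_eq (ENNReal.ofReal_toReal hVtop).symm
  have hvη : v ≤ η := ENNReal.toReal_le_of_le_ofReal hη0.le hVn.le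
  have hv1 : v ≤ 1 := le_trans hvη hη1
  have hCv_m : C * v ≤ m / 3 := by
    have h1 : C * v ≤ C * η := mul_le_mul_of_nonneg_left hvη hC0
    have h2 : C * η ≤ C * (m / (3*(C+1))) := mul_le_mul_of_nonneg_left hηm hC0
    have h3 : C * (m / (3*(C+1))) ≤ m / 3 := by
      have e : C * (m / (3*(C+1))) = (C*m) / (3*(C+1)) := by ring
      rw [e, div_le_div_iff₀ (by positivity) (by norm_num : (0:ℝ) < 3)]
      nlinarith [hm0.le]
    linarith
  have hCv_c : C * v < c := by
    have h1 : C * v ≤ C * η := mul_le_mul_of_nonneg_left hvη hC0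
    have h2 : C * η ≤ C * (c / (2*(C+1))) := mul_le_mul_of_nonneg_left hηc hC0
    have h3 : C * (c / (2*(C+1))) ≤ c / 2 := by
      have e : C * (c / (2*(C+1))) = (C*c) / (2*(C+1)) := by ring
      rw [e, div_le_div_iff₀ (by positivity) (by norm_num : (0:ℝ) < 2)]
      nlinarith [hc0.le]
    linarith
  have hlip : ∀ s : ℂ, SA - 1 ≤ s.re →
      ‖charFn μM s - charFn (μn n) s‖ ≤ C * v := by
    intro s hs
    exact charFn_sub_bound hMlink hMnorm.1 (hNn n).2.1 (hNn n).1.1 hv0 hv1 hvar' hs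
  have hs₀re' : SA - 1 ≤ s₀.re - r + r := by
    have : s₀.re = x₀ := hs₀re
    rw [this]
    linarith
  have hres₀ : SA - 1 ≤ s₀.re := by rw [hs₀re]; linarith
  -- existence of a zero of charFn (μn n) near s₀
  have hzero : ∃ z ∈ Metric.closedBall s₀ r, charFn (μn n) z = 0 := by
    by_contra hcon
    push_neg at hcon
    set g : ℂ → ℂ := fun z => (charFn (μn n) z)⁻¹ with hgdef
    have hg_diff : DiffContOnCl ℂ g (Metric.ball s₀ r) := by
      constructor
      · exact DifferentiableOn.inv ((charFn_diff (μn n)).differentiableOn)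
          (fun z hz => hcon z (Metric.ball_subset_closedBall hz))
      · rw [closure_ball s₀ hr0.ne']
        exact ContinuousOn.inv₀ ((charFn_cont (μn n)).continuousOn)
          (fun z hz => hcon z hz)
    have hfr : ∀ z ∈ frontier (Metric.ball s₀ r), ‖g z‖ ≤ (2 * m / 3)⁻¹ := by
      intro z hz
      rw [frontier_ball s₀ hr0.ne'] at hz
      have hdz : dist z s₀ = r := Metric.mem_sphere.1 hz
      have hrez : SA - 1 ≤ z.re := by
        have h1 : |(z - s₀).re| ≤ ‖z - s₀‖ := Complex.abs_re_le_norm _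
        rw [Complex.sub_re] at h1
        rw [← Complex.dist_eq, hdz] at h1
        have h2 : s₀.re - r ≤ z.re := by
          have := abs_le.1 h1
          linarith [this.1]
        have h3 : s₀.re = x₀ := hs₀re
        rw [h3] at h2
        linarith
      have h1 : m ≤ ‖charFn μM z‖ := hmle z hz
      have h2 : ‖charFn μM z - charFn (μn n) z‖ ≤ C * v := hlip z hrez
      have h3 : 2 * m / 3 ≤ ‖charFn (μn n) z‖ := by
        have h4 := norm_sub_norm_le (charFn μM z) (charFn (μn n) z)
        linarith [hCv_m]
      rw [hgdef]
      simp only [norm_inv]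
      exact inv_anti₀ (by linarith) h3
    have hcen : ‖g s₀‖ ≤ (2*m/3)⁻¹ := by
      refine Complex.norm_le_of_forall_mem_frontier_norm_le Metric.isBounded_ball
        hg_diff hfr ?_
      rw [closure_ball s₀ hr0.ne']
      exact Metric.mem_closedBall_self hr0.le
    have h4 : ‖charFn (μn n) s₀‖ ≤ m / 3 := by
      have h5 := hlip s₀ hres₀
      rw [hs₀zero, zero_sub, norm_neg] at h5
      linarith [hCv_m]
    have h6 : 0 < ‖charFn (μn n) s₀‖ :=
      norm_pos_iff.2 (hcon s₀ (Metric.mem_closedBall_self hr0.le))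
    have h7 : (2*m/3)⁻¹ < ‖g s₀‖ := by
      rw [hgdef]
      simp only [norm_inv]
      exact inv_strictAnti₀ h6 (by linarith)
    exact absurd hcen (not_le.2 h7)
  obtain ⟨z₀, hz₀mem, hz₀zero⟩ := hzero
  have hz₀re : SA - ε' < z₀.re := by
    have hdz : dist z₀ s₀ ≤ r := Metric.mem_closedBall.1 hz₀mem
    have h1 : |(z₀ - s₀).re| ≤ ‖z₀ - s₀‖ := Complex.abs_re_le_norm _
    rw [Complex.sub_re, ← Complex.dist_eq] at h1
    have h2 : s₀.re - r ≤ z₀.re := by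
      have := abs_le.1 (le_trans h1 hdz)
      linarith [this.1]
    have h3 : s₀.re = x₀ := hs₀re
    rw [h3] at h2
    linarith
  have hzZ : z₀.re ∈ {x : ℝ | ∃ s : ℂ, s.re = x ∧ charFn (μn n) s = 0} :=
    ⟨z₀, rfl, hz₀zero⟩
  have hlow : SA - ε' < specAbs (μn n) := by
    have hle : z₀.re ≤ specAbs (μn n) := by
      simp only [specAbs]
      exact le_csSup (hNn n).2.2.2.1 hzZ
    linarith
  have hupper : specAbs (μn n) ≤ SA + ε'/2 := by
    simp only [specAbs]
    refine csSup_le ⟨z₀.re, hzZ⟩ ?_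
    rintro x ⟨s, hsre, hszero⟩
    by_contra hx
    push_neg at hx
    have hsre2 : SA + ε'/2 ≤ s.re := by rw [hsre]; linarith
    have h8 := hcb s hsre2
    have h9 := hlip s (by linarith)
    rw [hszero, sub_zero] at h9
    have h10 : (c:ℝ) ≤ ‖charFn μM s‖ := by exact h8
    linarith
  have habs : |specAbs (μn n) - SA| < ε' := by
    rw [abs_sub_lt_iff]
    constructor <;> linarith
  rw [Real.dist_eq]
  exact lt_of_lt_of_le habs hε'ε
end
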